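/- arXiv:math/0702265 — 3 statements merged into one kernel-verified Lean document; each statement's English description precedes it below -/
import Mathlib

section
/- Let w = {g_1,...,g_{2r}} (r ≥ 2) be a non-split even closed walk in a graph with loops, with vertex sequence x_{i_1}, x_{i_2}, ..., x_{i_{2r}} (so g_j joins x_{i_j} and x_{i_{j+1}}, indices mod 2r). If x_{i_j} = x_{i_l} with 1 ≤ j < l ≤ 2r, then (1) x_{i_k} ≠ x_{i_j} for all k ≠ j, l, and (2) l - j is odd. -/
namespace Polar

variable {V : Type*}

/-- `vtx` is (the vertex sequence of) a closed walk of length `t` in the graph with loops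
whose edge set is `E`; the `j`-th edge of the walk is `s(vtx j, vtx (j+1))`. -/
def IsClosedWalk (E : Set (Sym2 V)) {t : ℕ} (vtx : ZMod t → V) : Prop :=
  ∀ j : ZMod t, s(vtx j, vtx (j + 1)) ∈ E

/-- The set of edges of a closed walk (its support). -/
def walkEdges {t : ℕ} (vtx : ZMod t → V) : Set (Sym2 V) :=
  {e | ∃ j : ZMod t, e = s(vtx j, vtx (j + 1))}

/-- The multiplicity with which an edge is traversed by a closed walk. -/
noncomputable def edgeMult {t : ℕ} (vtx : ZMod t → V) (e : Sym2 V) : ℕ :=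
  {j : ZMod t | s(vtx j, vtx (j + 1)) = e}.ncard

/-- The multiset of edges of a closed walk, counted with multiplicity. -/
def edgeMS {t : ℕ} (vtx : ZMod t → V) : Multiset (Sym2 V) :=
  (Multiset.range t).map fun j => s(vtx (j : ZMod t), vtx ((j : ZMod t) + 1))

/-- An even closed walk of length `2r` splits if, after a cyclic rotation, it decomposes at a
repeated vertex into two smaller even closed walks, i.e. some vertex recurs at an even
(nonzero, proper) distance along the walk. -/
def Splits {r : ℕ} (vtx : ZMod (2 * r) → V) : Prop :=
  ∃ (j : ZMod (2 * r)) (s : ℕ), 0 < s ∧ s < r ∧ vtx j = vtx (j + (2 * s : ℕ))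

/-- A non-split even closed walk. -/
def NonSplit {r : ℕ} (vtx : ZMod (2 * r) → V) : Prop := ¬ Splits vtx

/-- A cycle in a graph with loops: a closed walk with no vertex repetition.
Loops are the cycles of length `1`; there is no cycle of length `2`. -/
structure Cyc (V : Type*) (E : Set (Sym2 V)) where
  len : ℕ
  pos : 0 < len
  not_two : len ≠ 2
  vtx : ZMod len → V
  inj : Function.Injective vtx
  mem : ∀ j, s(vtx j, vtx (j + 1)) ∈ E

namespace Cyc
variable {E : Set (Sym2 V)}

def edges (c : Cyc V E) : Set (Sym2 V) := {e | ∃ j, e = s(c.vtx j, c.vtx (j + 1))}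

def vertices (c : Cyc V E) : Set V := Set.range c.vtx

/-- A loop, regarded as a (degenerate odd) cycle. -/
def IsLoop (c : Cyc V E) : Prop := c.len = 1

end Cyc

/-- A cycle arrangement: a connected subgraph consisting of a family of constituent cycles
such that (C1) any two constituent cycles have mutually disjoint edges, (C2) any two
constituent cycles share at most one vertex, and (C3) any vertex belongs to at most two
constituent cycles. -/
structure CycArr (V : Type*) (E : Set (Sym2 V)) where
  num : ℕ
  npos : 0 < num
  cyc : Fin num → Cyc V E
  edgeDisj : ∀ i j, i ≠ j → (cyc i).edges ∩ (cyc j).edges = ∅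
  shareAtMostOne : ∀ i j, i ≠ j → ((cyc i).vertices ∩ (cyc j).vertices).Subsingleton
  atMostTwo : ∀ v i j l, v ∈ (cyc i).vertices → v ∈ (cyc j).vertices →
    v ∈ (cyc l).vertices → i = j ∨ i = l ∨ j = l
  conn : ∀ u v, u ∈ ⋃ i, (cyc i).vertices → v ∈ ⋃ i, (cyc i).vertices →
    Relation.ReflTransGen (fun a b => ∃ i, s(a, b) ∈ (cyc i).edges) u v

namespace CycArr
variable {E : Set (Sym2 V)}

def edges (A : CycArr V E) : Set (Sym2 V) := ⋃ i, (A.cyc i).edges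

def vertices (A : CycArr V E) : Set V := ⋃ i, (A.cyc i).vertices

/-- The arrangement is even when the total number of edges of its constituent cycles is even. -/
def EvenArr (A : CycArr V E) : Prop := Even (∑ i, (A.cyc i).len)

/-- A simple vertex: one belonging to exactly one constituent cycle. -/
def Simple (A : CycArr V E) (v : V) : Prop :=
  v ∈ A.vertices ∧ ∀ i j, v ∈ (A.cyc i).vertices → v ∈ (A.cyc j).vertices → i = j

end CycArr

/-- A (nonempty, vertex-injective) path in a graph with loops. -/
structure PathIn (V : Type*) (E : Set (Sym2 V)) where
  len : ℕ
  pos : 0 < len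
  vtx : Fin (len + 1) → V
  inj : Function.Injective vtx
  mem : ∀ j : Fin len, s(vtx j.castSucc, vtx j.succ) ∈ E

namespace PathIn
variable {E : Set (Sym2 V)}

def vertices (p : PathIn V E) : Set V := Set.range p.vtx

def edges (p : PathIn V E) : Set (Sym2 V) :=
  {e | ∃ j : Fin p.len, e = s(p.vtx j.castSucc, p.vtx j.succ)}

/-- An extremal (first or last) vertex of the path. -/
def Extremal (p : PathIn V E) (v : V) : Prop := v = p.vtx 0 ∨ v = p.vtx (Fin.last p.len)

end PathIn

/-- A molecule: `r ≥ 2` structural cycle arrangements joined by `r - 1` structural paths,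
subject to conditions (M1)–(M6). -/
structure Molecule (V : Type*) (E : Set (Sym2 V)) where
  r : ℕ
  hr : 2 ≤ r
  ca : Fin r → CycArr V E
  path : Fin (r - 1) → PathIn V E
  M1 : ∀ i j, i ≠ j → (ca i).edges ∩ (ca j).edges = ∅
  M2 : ∀ i j, i ≠ j → (path i).vertices ∩ (path j).vertices = ∅
  M3 : ∀ i j, ((ca i).vertices ∩ (path j).vertices).Subsingleton
  M3e : ∀ i j, (ca i).edges ∩ (path j).edges = ∅
  M4a : ∀ i, ∃ j, ((ca i).vertices ∩ (path j).vertices).Nonempty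
  M4b : ∀ j, ∃ i₁ i₂, i₁ ≠ i₂ ∧ ((ca i₁).vertices ∩ (path j).vertices).Nonempty ∧
    ((ca i₂).vertices ∩ (path j).vertices).Nonempty ∧
    ∀ i, ((ca i).vertices ∩ (path j).vertices).Nonempty → i = i₁ ∨ i = i₂
  M5 : ∀ v i j l, v ∈ (ca i).vertices → v ∈ (ca j).vertices → v ∈ (ca l).vertices →
    i = j ∨ i = l ∨ j = l
  M6a : ∀ v i j, i ≠ j → v ∈ (ca i).vertices → v ∈ (ca j).vertices →
    (ca i).Simple v ∧ (ca j).Simple v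
  M6b : ∀ v i j, v ∈ (ca i).vertices → v ∈ (path j).vertices →
    (ca i).Simple v ∧ (path j).Extremal v
  conn : ∀ u v, u ∈ (⋃ i, (ca i).vertices) ∪ ⋃ j, (path j).vertices →
    v ∈ (⋃ i, (ca i).vertices) ∪ ⋃ j, (path j).vertices →
    Relation.ReflTransGen
      (fun a b => (∃ i, s(a, b) ∈ (ca i).edges) ∨ ∃ j, s(a, b) ∈ (path j).edges) u v

namespace Molecule
variable {E : Set (Sym2 V)}

def cycEdges (M : Molecule V E) : Set (Sym2 V) := ⋃ i, (M.ca i).edges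

def pathEdges (M : Molecule V E) : Set (Sym2 V) := ⋃ j, (M.path j).edges

def edges (M : Molecule V E) : Set (Sym2 V) := M.cycEdges ∪ M.pathEdges

def vertices (M : Molecule V E) : Set V :=
  (⋃ i, (M.ca i).vertices) ∪ ⋃ j, (M.path j).vertices

/-- The molecule is even when the total number of edges of its constituent cycles is even. -/
def EvenMol (M : Molecule V E) : Prop := Even (∑ i, ∑ c, ((M.ca i).cyc c).len)

end Molecule

/-- A closed walk realizes (is supported on) a cycle arrangement if it traverses every edge
of the arrangement exactly once and no other edge. -/
def RealizesCA {E : Set (Sym2 V)} (A : CycArr V E) {t : ℕ} (vtx : ZMod t → V) : Prop :=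
  IsClosedWalk E vtx ∧ (∀ e ∈ A.edges, edgeMult vtx e = 1) ∧
    ∀ e, e ∉ A.edges → edgeMult vtx e = 0

/-- A closed walk realizes (is supported on) a molecule if it traverses every
constituent-cycle edge once, every structural-path edge twice, and no other edge. -/
def RealizesMol {E : Set (Sym2 V)} (M : Molecule V E) {t : ℕ} (vtx : ZMod t → V) : Prop :=
  IsClosedWalk E vtx ∧ (∀ e ∈ M.cycEdges, edgeMult vtx e = 1) ∧
    (∀ e ∈ M.pathEdges, edgeMult vtx e = 2) ∧
    ∀ e, e ∉ M.edges → edgeMult vtx e = 0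

/-- Decomposability of an even closed walk: there are squarefree edges `h 0, …, h (t-1)` of the
graph, supported on vertices of the walk, such that adding each of them twice to the edge
sequence one obtains an even closed walk splitting into two smaller even closed walks, neither
containing the original walk, each of whose edge sequences contains all the `h j`. -/
def Decomposable (E : Set (Sym2 V)) {r : ℕ} (vtx : ZMod (2 * r) → V) : Prop :=
  ∃ (t : ℕ) (h : Fin t → Sym2 V), 0 < t ∧
    (∀ j, h j ∈ E) ∧ (∀ j, ¬ (h j).IsDiag) ∧
    (∀ j, ∀ v ∈ h j, v ∈ Set.range vtx) ∧
    ∃ (a b : ℕ) (w₁ : ZMod (2 * a) → V) (w₂ : ZMod (2 * b) → V),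
      0 < a ∧ 0 < b ∧ a < r + t ∧ b < r + t ∧
      IsClosedWalk E w₁ ∧ IsClosedWalk E w₂ ∧
      (Set.range w₁ ∩ Set.range w₂).Nonempty ∧
      edgeMS w₁ + edgeMS w₂ = edgeMS vtx + 2 • (Finset.univ.val.map h) ∧
      (∀ j, h j ∈ edgeMS w₁) ∧ (∀ j, h j ∈ edgeMS w₂) ∧
      ¬ edgeMS vtx ≤ edgeMS w₁ ∧ ¬ edgeMS vtx ≤ edgeMS w₂

/-- A bow tie: two edge-disjoint odd cycles (possibly loops) joined by a path, which may
degenerate to a single vertex (`plen = 0`, the path-degenerate case). -/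
structure BowTie (V : Type*) (E : Set (Sym2 V)) where
  c1 : Cyc V E
  c2 : Cyc V E
  odd1 : Odd c1.len
  odd2 : Odd c2.len
  edisj : c1.edges ∩ c2.edges = ∅
  plen : ℕ
  pvtx : Fin (plen + 1) → V
  pinj : Function.Injective pvtx
  pmem : ∀ j : Fin plen, s(pvtx j.castSucc, pvtx j.succ) ∈ E
  hstart : pvtx 0 ∈ c1.vertices
  hstop : pvtx (Fin.last plen) ∈ c2.vertices
  meet1 : ∀ j, pvtx j ∈ c1.vertices → j = 0
  meet2 : ∀ j, pvtx j ∈ c2.vertices → j = Fin.last plen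
  cmeet : ∀ v, v ∈ c1.vertices → v ∈ c2.vertices → plen = 0 ∧ v = pvtx 0

namespace BowTie
variable {E : Set (Sym2 V)}

def pathEdges (B : BowTie V E) : Set (Sym2 V) :=
  {e | ∃ j : Fin B.plen, e = s(B.pvtx j.castSucc, B.pvtx j.succ)}

def edges (B : BowTie V E) : Set (Sym2 V) := B.c1.edges ∪ B.c2.edges ∪ B.pathEdges

def vertices (B : BowTie V E) : Set V := B.c1.vertices ∪ B.c2.vertices ∪ Set.range B.pvtx

/-- The connecting path degenerates to a single vertex. -/
def PathDegenerate (B : BowTie V E) : Prop := B.plen = 0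

/-- The connecting path is a single edge. -/
def Monedge (B : BowTie V E) : Prop := B.plen = 1

/-- At least one of the two odd cycles is a loop. -/
def Looped (B : BowTie V E) : Prop := B.c1.IsLoop ∨ B.c2.IsLoop

end BowTie

/-- The bow tie is an induced subgraph of the graph with loops `E`: every non-loop edge
of `E` joining two of its vertices belongs to it (when passing to an induced subgraph one is
allowed to delete loops). -/
def InducedBT {E : Set (Sym2 V)} (B : BowTie V E) : Prop :=
  ∀ e ∈ E, ¬ e.IsDiag → (∀ v ∈ e, v ∈ B.vertices) → e ∈ B.edges

end Polar

namespace Polar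

variable {V : Type*} {r : ℕ} {vtx : ZMod (2 * r) → V}

theorem splits_of_vtx_eq_of_even {a b : ℕ} (hab : a < b) (hba : b < a + 2 * r)
    (heven : Even (b - a)) (h : vtx a = vtx b) : Splits vtx := by
  obtain ⟨s, hs⟩ := heven
  refine ⟨a, s, by omega, by omega, ?_⟩
  rwa [← Nat.cast_add, show a + 2 * s = b by omega]

theorem NonSplit.sub_emod_two_eq_one_of_vtx_eq (hns : NonSplit vtx) {a b : ℕ} (hne : a ≠ b)
    (hab : a < b + 2 * r) (hba : b < a + 2 * r) (h : vtx a = vtx b) :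
    ((a : ℤ) - b) % 2 = 1 := by
  have odd_of_lt : ∀ {a b : ℕ}, a < b → b < a + 2 * r → vtx a = vtx b → (b - a) % 2 = 1 :=
    fun hlt hlt' h ↦ by
      by_contra heven
      exact hns (splits_of_vtx_eq_of_even hlt hlt' (Nat.even_iff.mpr (by omega)) h)
  rcases hne.lt_or_gt with hlt | hlt
  · have := odd_of_lt hlt hba h
    omega
  · have := odd_of_lt hlt hab h.symm
    omega

end Polar

open Polar in
theorem vertex_repetition_in_nonsplit_walk_general {V : Type*} {r : ℕ}
    (vtx : ZMod (2 * r) → V)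
    (hns : NonSplit vtx)
    {j l : ℕ} (hj : 1 ≤ j) (hjl : j < l) (hl : l ≤ 2 * r)
    (hrep : vtx (j : ZMod (2 * r)) = vtx (l : ZMod (2 * r))) :
    (∀ k : ℕ, 1 ≤ k → k ≤ 2 * r → k ≠ j → k ≠ l →
      vtx (k : ZMod (2 * r)) ≠ vtx (j : ZMod (2 * r))) ∧ (l - j) % 2 = 1 := by
  have hjl_odd := hns.sub_emod_two_eq_one_of_vtx_eq hjl.ne (by omega) (by omega) hrep
  refine ⟨fun k hk hk' hkj hkl hkvtx ↦ ?_, by omega⟩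
  -- three pairwise odd differences cannot sum to zero
  have hkj_odd := hns.sub_emod_two_eq_one_of_vtx_eq hkj (by omega) (by omega) hkvtx
  have hlk_odd := hns.sub_emod_two_eq_one_of_vtx_eq hkl.symm (by omega) (by omega)
    (hrep.symm.trans hkvtx.symm)
  omega

open Polar in
/-- Lemma 3.4 (vertex repetitions in a non-split even closed walk): in a non-split even closed
walk of length `2r` (`r ≥ 2`), a repeated vertex recurs exactly once (uniqueness of recurrence),
and the two occurrences are at odd distance (parity condition). Positions are `1,…,2r`. -/
theorem vertex_repetition_in_nonsplit_walk {V : Type*} (E : Set (Sym2 V)) {r : ℕ}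
    (hr : 2 ≤ r) (vtx : ZMod (2 * r) → V)
    (hwalk : IsClosedWalk E vtx) (hns : NonSplit vtx)
    {j l : ℕ} (hj : 1 ≤ j) (hjl : j < l) (hl : l ≤ 2 * r)
    (hrep : vtx (j : ZMod (2 * r)) = vtx (l : ZMod (2 * r))) :
    (∀ k : ℕ, 1 ≤ k → k ≤ 2 * r → k ≠ j → k ≠ l →
      vtx (k : ZMod (2 * r)) ≠ vtx (j : ZMod (2 * r))) ∧ (l - j) % 2 = 1 :=
  vertex_repetition_in_nonsplit_walk_general vtx hns hj hjl hl hrep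
end

section
/- If w is a non-split even closed walk in a graph G with loops containing a constituent cycle of which at least two vertices are repeated vertices of w, then w is decomposable. -/
namespace Polar

variable {V : Type*}

section Aux


lemma edgeMS_def {t : ℕ} (vtx : ZMod t → V) : edgeMS vtx
    = (Multiset.range t).map (fun j : ℕ => s(vtx (j : ZMod t), vtx ((j : ZMod t) + 1))) := by
  unfold edgeMS; simp [Multiset.map_map]

/-- permutation of `range n` -/
lemma multiset_map_range_eq_range (n : ℕ) (σ : ℕ → ℕ)
    (hlt : ∀ i < n, σ i < n) (hinj : ∀ i < n, ∀ j < n, σ i = σ j → i = j) :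
    (Multiset.range n).map σ = Multiset.range n := by
  have hnd : ((Multiset.range n).map σ).Nodup :=
    (Multiset.nodup_range n).map_on
      (fun x hx y hy h => hinj x (Multiset.mem_range.1 hx) y (Multiset.mem_range.1 hy) h)
  have hsub : (Multiset.range n).map σ ⊆ Multiset.range n := by
    intro a ha
    obtain ⟨i, hi, rfl⟩ := Multiset.mem_map.1 ha
    exact Multiset.mem_range.2 (hlt i (Multiset.mem_range.1 hi))
  exact Multiset.eq_of_le_of_card_le ((Multiset.le_iff_subset hnd).2 hsub) (by simp)

lemma map_range_reverse {α : Type*} (n : ℕ) (f : ℕ → α) :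
    (Multiset.range n).map (fun i => f (n - 1 - i)) = (Multiset.range n).map f := by
  conv_rhs => rw [← multiset_map_range_eq_range n (fun i => n - 1 - i)
    (by intro i hi; show n - 1 - i < n; omega) (by intro i hi j hj h; have h' : n - 1 - i = n - 1 - j := h; omega)]
  rw [Multiset.map_map]
  rfl

lemma range_map_natCast_eq_univ (n : ℕ) [NeZero n] :
    (Multiset.range n).map (Nat.cast : ℕ → ZMod n) = (Finset.univ : Finset (ZMod n)).val := by
  have hnd : ((Multiset.range n).map (Nat.cast : ℕ → ZMod n)).Nodup :=
    (Multiset.nodup_range n).map_on (by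
      intro x hx y hy h
      have := congrArg ZMod.val h
      rwa [ZMod.val_cast_of_lt (Multiset.mem_range.1 hx),
        ZMod.val_cast_of_lt (Multiset.mem_range.1 hy)] at this)
  have hsub : (Multiset.range n).map (Nat.cast : ℕ → ZMod n) ⊆ Finset.univ.val := by
    intro a _; simp
  refine Multiset.eq_of_le_of_card_le ((Multiset.le_iff_subset hnd).2 hsub) ?_
  simp [Finset.card_univ, ZMod.card]

lemma fin_univ_val_map (n : ℕ) :
    (Finset.univ : Finset (Fin n)).val.map Fin.val = Multiset.range n := by
  have hnd : ((Finset.univ : Finset (Fin n)).val.map Fin.val).Nodup :=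
    Finset.univ.nodup.map Fin.val_injective
  have hsub : (Finset.univ : Finset (Fin n)).val.map Fin.val ⊆ Multiset.range n := by
    intro a ha
    obtain ⟨i, _, rfl⟩ := Multiset.mem_map.1 ha
    exact Multiset.mem_range.2 i.isLt
  refine Multiset.eq_of_le_of_card_le ((Multiset.le_iff_subset hnd).2 hsub) ?_
  simp

/-- The multiset of edges of the walk segment starting at `x` of length `d`. -/
def segMS {n : ℕ} (vtx : ZMod n → V) (x : ZMod n) (d : ℕ) : Multiset (Sym2 V) :=
  (Multiset.range d).map fun s => s(vtx (x + (s : ℕ)), vtx (x + (s : ℕ) + 1))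

/-- The multiset of edges of a finite path `g 0, g 1, …, g ℓ`. -/
def pathMS (g : ℕ → V) (ℓ : ℕ) : Multiset (Sym2 V) :=
  (Multiset.range ℓ).map fun s => s(g s, g (s + 1))

lemma segMS_add {n : ℕ} (vtx : ZMod n → V) (x : ZMod n) (d₁ d₂ : ℕ) :
    segMS vtx x (d₁ + d₂) = segMS vtx x d₁ + segMS vtx (x + (d₁ : ℕ)) d₂ := by
  unfold segMS
  rw [Multiset.range_add, Multiset.map_add, Multiset.map_map]
  congr 1
  apply Multiset.map_congr rfl
  intro s _
  have h1 : x + ((d₁ + s : ℕ) : ZMod n) = x + (d₁ : ℕ) + (s : ℕ) := by push_cast; ring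
  simp only [Function.comp_apply, h1]

lemma pathMS_card (g : ℕ → V) (ℓ : ℕ) : Multiset.card (pathMS g ℓ) = ℓ := by simp [pathMS]

lemma segMS_card {n : ℕ} (vtx : ZMod n → V) (x : ZMod n) (d : ℕ) :
    Multiset.card (segMS vtx x d) = d := by simp [segMS]

lemma mem_segMS_first {n : ℕ} (vtx : ZMod n → V) (x : ZMod n) (d : ℕ) (hd : 0 < d) :
    s(vtx x, vtx (x + 1)) ∈ segMS vtx x d := by
  refine Multiset.mem_map.2 ⟨0, Multiset.mem_range.2 hd, ?_⟩
  norm_num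

lemma segMS_succ {n : ℕ} (vtx : ZMod n → V) (x : ZMod n) (d : ℕ) :
    segMS vtx x (1 + d) = s(vtx x, vtx (x + 1)) ::ₘ segMS vtx (x + 1) d := by
  rw [segMS_add]
  have h1 : segMS vtx x 1 = {s(vtx x, vtx (x + 1))} := by
    unfold segMS
    rw [show Multiset.range 1 = {0} from rfl]
    norm_num
  rw [h1]
  have : x + ((1:ℕ) : ZMod n) = x + 1 := by norm_num
  rw [this]
  rfl

lemma pathMS_succ (g : ℕ → V) (a ℓ : ℕ) :
    pathMS (fun i => g (a + i)) (1 + ℓ) = s(g a, g (a + 1)) ::ₘ pathMS (fun i => g (a + 1 + i)) ℓ := by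
  unfold pathMS
  rw [Multiset.range_add, Multiset.map_add, Multiset.map_map]
  have h1 : (Multiset.range 1).map (fun s => s(g (a + s), g (a + (s + 1)))) = {s(g a, g (a+1))} := by
    rw [show Multiset.range 1 = {0} from rfl]; norm_num
  rw [h1]
  have h2 : ∀ s : ℕ, s(g (a + (1 + s)), g (a + (1 + s + 1))) = s(g (a + 1 + s), g (a + 1 + s + 1)) := by
    intro s
    rw [show a + (1 + s) = a + 1 + s by omega, show a + (1 + s + 1) = a + 1 + s + 1 by omega]
  simp only [Function.comp_apply]
  rw [Multiset.map_congr rfl (fun s _ => h2 s)]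
  rfl

lemma edgeMS_eq_segMS {n : ℕ} [NeZero n] (vtx : ZMod n → V) (x : ZMod n) :
    edgeMS vtx = segMS vtx x n := by
  have huniv : ∀ f : ZMod n → Sym2 V,
      (Multiset.range n).map (fun j : ℕ => f (j : ZMod n)) = Finset.univ.val.map f := by
    intro f
    rw [← range_map_natCast_eq_univ n, Multiset.map_map]
    rfl
  have key : (Finset.univ.val.map fun j : ZMod n => s(vtx (x + j), vtx (x + j + 1)))
      = Finset.univ.val.map fun j : ZMod n => s(vtx j, vtx (j + 1)) := by
    calc (Finset.univ.val.map fun j : ZMod n => s(vtx (x + j), vtx (x + j + 1)))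
        = (Finset.univ.val.map (fun j => (Equiv.addLeft x) j)).map
            (fun j : ZMod n => s(vtx j, vtx (j + 1))) := by
          rw [Multiset.map_map]; rfl
      _ = ((Finset.univ.map (Equiv.addLeft x).toEmbedding).val).map
            (fun j : ZMod n => s(vtx j, vtx (j + 1))) := by
          rw [Finset.map_val]; rfl
      _ = _ := by rw [Finset.map_univ_equiv]
  have e1 : edgeMS vtx = Finset.univ.val.map fun j : ZMod n => s(vtx j, vtx (j + 1)) := by
    rw [edgeMS_def]
    exact huniv (fun j : ZMod n => s(vtx j, vtx (j + 1)))
  have e2 : segMS vtx x n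
      = Finset.univ.val.map fun j : ZMod n => s(vtx (x + j), vtx (x + j + 1)) := by
    unfold segMS
    exact huniv (fun j : ZMod n => s(vtx (x + j), vtx (x + j + 1)))
  rw [e1, e2, key]

lemma edgeMS_split {n : ℕ} [NeZero n] (vtx : ZMod n → V) (x : ZMod n) (d : ℕ) (hd : d ≤ n) :
    edgeMS vtx = segMS vtx x d + segMS vtx (x + (d : ℕ)) (n - d) := by
  have h := segMS_add vtx x d (n - d)
  rw [show d + (n - d) = n by omega] at h
  rw [edgeMS_eq_segMS vtx x, h]



/-- gluing a walk segment and a return path into a closed walk -/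
def glueW (n m : ℕ) (P Q : ℕ → V) : ZMod n → V :=
  fun k => if k.val < m then P k.val else Q (k.val - m)

lemma glueW_spec {E : Set (Sym2 V)} (n m l : ℕ) (hm : 0 < m) (hl : 0 < l) (hn : n = m + l)
    (P Q : ℕ → V)
    (hP : ∀ s < m, s(P s, P (s + 1)) ∈ E) (hQ : ∀ s < l, s(Q s, Q (s + 1)) ∈ E)
    (hPQ : P m = Q 0) (hQP : Q l = P 0) :
    IsClosedWalk E (glueW n m P Q) ∧
    edgeMS (glueW n m P Q) = pathMS P m + pathMS Q l ∧
    glueW n m P Q ((m : ℕ) : ZMod n) = Q 0 ∧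
    glueW n m P Q 0 = P 0 := by
  haveI : NeZero n := ⟨by omega⟩
  set W := glueW n m P Q with hW
  have hWval : ∀ j : ℕ, j < n → W (j : ZMod n) = if j < m then P j else Q (j - m) := by
    intro j hj
    show (if ((j : ZMod n)).val < m then P ((j : ZMod n)).val else Q (((j : ZMod n)).val - m)) = _
    rw [ZMod.val_cast_of_lt hj]
  have key : ∀ j : ℕ, j < n → s(W (j : ZMod n), W ((j : ZMod n) + 1))
      = (if j < m then s(P j, P (j + 1)) else s(Q (j - m), Q (j - m + 1))) := by
    intro j hj
    have hcast : ((j : ZMod n) + 1) = (((j + 1 : ℕ)) : ZMod n) := by push_cast; ring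
    by_cases hjn : j + 1 < n
    · rw [hcast, hWval j hj, hWval (j + 1) hjn]
      by_cases h1 : j + 1 < m
      · rw [if_pos (by omega), if_pos h1, if_pos (by omega)]
      · by_cases h2 : j < m
        · -- j + 1 = m
          have hjm : j + 1 = m := by omega
          rw [if_pos h2, if_pos h2, if_neg (by omega)]
          rw [show j + 1 - m = 0 by omega, ← hPQ, ← hjm]
        · rw [if_neg h2, if_neg h2, if_neg (by omega), show j + 1 - m = j - m + 1 by omega]
    · -- j = n - 1
      have hj1 : j + 1 = n := by omega
      have hz : ((j : ZMod n) + 1) = ((0 : ℕ) : ZMod n) := by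
        rw [hcast, hj1]; norm_num
      rw [hz, hWval j hj, hWval 0 (by omega)]
      have hjm : ¬ j < m := by omega
      rw [if_neg hjm, if_pos hm, if_neg hjm]
      rw [show j - m = l - 1 by omega, ← hQP, show l - 1 + 1 = l by omega]
  refine ⟨?_, ?_, ?_, ?_⟩
  · intro k
    have hk : k = ((k.val : ℕ) : ZMod n) := (ZMod.natCast_rightInverse k).symm
    rw [hk, key k.val (ZMod.val_lt k)]
    by_cases h : k.val < m
    · rw [if_pos h]; exact hP _ h
    · rw [if_neg h]; exact hQ _ (by have := ZMod.val_lt k; omega)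
  · rw [edgeMS_def]
    have : (Multiset.range n).map (fun j : ℕ => s(W (j : ZMod n), W ((j : ZMod n) + 1)))
        = (Multiset.range n).map
          (fun j : ℕ => if j < m then s(P j, P (j + 1)) else s(Q (j - m), Q (j - m + 1))) :=
      Multiset.map_congr rfl (fun j hj => key j (Multiset.mem_range.1 hj))
    rw [this, hn, Multiset.range_add, Multiset.map_add, Multiset.map_map]
    congr 1
    · exact Multiset.map_congr rfl (fun j hj => by
        rw [if_pos (Multiset.mem_range.1 hj)])
    · exact Multiset.map_congr rfl (fun j _ => by
        show (if m + j < m then _ else _) = _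
        rw [if_neg (by omega), show m + j - m = j by omega])
  · rw [hWval m (by omega), if_neg (by omega), Nat.sub_self]
  · show (if (0 : ZMod n).val < m then P (0 : ZMod n).val else Q ((0 : ZMod n).val - m)) = P 0
    rw [ZMod.val_zero, if_pos hm]

lemma pathMS_of_seg {n : ℕ} (vtx : ZMod n → V) (x : ZMod n) (d : ℕ) :
    pathMS (fun s => vtx (x + (s : ℕ))) d = segMS vtx x d := by
  unfold pathMS segMS
  exact Multiset.map_congr rfl (fun s _ => by push_cast; ring_nf)

lemma pathMS_reverse (g : ℕ → V) (ℓ : ℕ) :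
    pathMS (fun s => g (ℓ - s)) ℓ = pathMS g ℓ := by
  unfold pathMS
  rw [← map_range_reverse ℓ (fun s => s(g s, g (s + 1)))]
  apply Multiset.map_congr rfl
  intro s hs
  have hs' : s < ℓ := Multiset.mem_range.1 hs
  show s(g (ℓ - s), g (ℓ - (s + 1))) = s(g (ℓ - 1 - s), g (ℓ - 1 - s + 1))
  rw [show ℓ - s = (ℓ - 1 - s) + 1 by omega, show ℓ - (s + 1) = ℓ - 1 - s by omega]
  exact Sym2.eq_swap

lemma scheme_I {E : Set (Sym2 V)} {r : ℕ} (hr : 0 < r) (vtx : ZMod (2 * r) → V)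
    (hwalk : IsClosedWalk E vtx)
    (x : ZMod (2 * r)) (d : ℕ) (hd0 : 0 < d) (hdlt : d < 2 * r)
    (ℓ : ℕ) (hℓ : 0 < ℓ) (g : ℕ → V)
    (hg0 : g 0 = vtx (x + (d : ℕ)))
    (hgl : g ℓ = vtx x)
    (hgE : ∀ s < ℓ, s(g s, g (s + 1)) ∈ E)
    (hgnd : ∀ s < ℓ, g s ≠ g (s + 1))
    (hgR : ∀ s ≤ ℓ, g s ∈ Set.range vtx)
    (hpar : (d + ℓ) % 2 = 0)
    (h1 : ¬ (segMS vtx (x + (d : ℕ)) (2 * r - d) ≤ pathMS g ℓ))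
    (h2 : ¬ (segMS vtx x d ≤ pathMS g ℓ)) :
    Decomposable E vtx := by
  haveI : NeZero (2 * r) := ⟨by omega⟩
  obtain ⟨a, ha⟩ : ∃ a, d + ℓ = 2 * a := ⟨(d + ℓ) / 2, by omega⟩
  obtain ⟨b, hb⟩ : ∃ b, (2 * r - d) + ℓ = 2 * b := ⟨((2 * r - d) + ℓ) / 2, by omega⟩
  have hcc : ((d : ZMod (2 * r)) + ((2 * r - d : ℕ) : ZMod (2 * r))) = 0 := by
    rw [← Nat.cast_add, show d + (2 * r - d) = 2 * r by omega]
    exact ZMod.natCast_self _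
  have hsplit1 : edgeMS vtx = segMS vtx x d + segMS vtx (x + (d : ℕ)) (2 * r - d) :=
    edgeMS_split vtx x d (by omega)
  have hsplit2 : edgeMS vtx = segMS vtx (x + (d : ℕ)) (2 * r - d) + segMS vtx x d := by
    have h := edgeMS_split vtx (x + (d : ℕ)) (2 * r - d) (by omega)
    rw [show 2 * r - (2 * r - d) = d by omega] at h
    rw [h, add_assoc, hcc, add_zero]
  obtain ⟨hw1, hms1, hpt1, hpt1'⟩ := glueW_spec (E := E) (2 * a) d ℓ hd0 hℓ (by omega)
    (fun s => vtx (x + (s : ℕ))) g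
    (fun s hs => by
      show s(vtx (x + (s : ℕ)), vtx (x + ((s + 1 : ℕ) : ZMod (2 * r)))) ∈ E
      have hc : vtx (x + ((s + 1 : ℕ) : ZMod (2 * r))) = vtx (x + (s : ℕ) + 1) := by
        push_cast; ring_nf
      rw [hc]; exact hwalk (x + (s : ℕ)))
    hgE
    (by show vtx (x + (d : ℕ)) = g 0; rw [hg0])
    (by show g ℓ = vtx (x + ((0 : ℕ) : ZMod (2 * r))); rw [hgl]; norm_num)
  obtain ⟨hw2, hms2, hpt2, hpt2'⟩ := glueW_spec (E := E) (2 * b) (2 * r - d) ℓ (by omega) hℓ (by omega)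
    (fun s => vtx (x + (d : ℕ) + (s : ℕ))) (fun s => g (ℓ - s))
    (fun s hs => by
      show s(vtx (x + (d : ℕ) + (s : ℕ)), vtx (x + (d : ℕ) + ((s + 1 : ℕ) : ZMod (2 * r)))) ∈ E
      have hc : vtx (x + (d : ℕ) + ((s + 1 : ℕ) : ZMod (2 * r))) = vtx (x + (d : ℕ) + (s : ℕ) + 1) := by
        push_cast; ring_nf
      rw [hc]; exact hwalk (x + (d : ℕ) + (s : ℕ)))
    (fun s hs => by
      show s(g (ℓ - s), g (ℓ - (s + 1))) ∈ E
      rw [show ℓ - s = (ℓ - 1 - s) + 1 by omega, show ℓ - (s + 1) = ℓ - 1 - s by omega,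
        Sym2.eq_swap]
      exact hgE (ℓ - 1 - s) (by omega))
    (by
      show vtx (x + (d : ℕ) + ((2 * r - d : ℕ) : ZMod (2 * r))) = g (ℓ - 0)
      rw [Nat.sub_zero, hgl, add_assoc, hcc, add_zero])
    (by
      show g (ℓ - ℓ) = vtx (x + (d : ℕ) + ((0 : ℕ) : ZMod (2 * r)))
      rw [Nat.sub_self, hg0]; norm_num)
  rw [pathMS_of_seg] at hms1
  have hms2' : edgeMS (glueW (2 * b) (2 * r - d) (fun s => vtx (x + (d : ℕ) + (s : ℕ))) (fun s => g (ℓ - s)))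
      = segMS vtx (x + (d : ℕ)) (2 * r - d) + pathMS g ℓ := by
    rw [hms2, pathMS_reverse, pathMS_of_seg]
  have hGmap : Finset.univ.val.map (fun j : Fin ℓ => s(g j.val, g (j.val + 1))) = pathMS g ℓ := by
    unfold pathMS
    rw [← fin_univ_val_map ℓ, Multiset.map_map]
    rfl
  refine ⟨ℓ, fun j => s(g j.val, g (j.val + 1)), hℓ,
    fun j => hgE j.val j.isLt,
    fun j => by rw [Sym2.mk_isDiag_iff]; exact hgnd j.val j.isLt,
    fun j w hw => by
      rcases Sym2.mem_iff.1 hw with h | h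
      · exact h ▸ hgR j.val (le_of_lt j.isLt)
      · exact h ▸ hgR (j.val + 1) j.isLt,
    a, b, _, _, by omega, by omega, by omega, by omega, hw1, hw2,
    ⟨vtx x, ⟨0, by rw [hpt1']; norm_num⟩, ⟨_, by rw [hpt2]; rw [Nat.sub_zero, hgl]⟩⟩,
    ?_, ?_, ?_, ?_, ?_⟩
  · rw [hms1, hms2', hGmap, hsplit1, two_nsmul]
    abel
  · intro j
    rw [hms1]
    refine Multiset.mem_add.2 (Or.inr ?_)
    exact Multiset.mem_map.2 ⟨j.val, Multiset.mem_range.2 j.isLt, rfl⟩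
  · intro j
    rw [hms2']
    refine Multiset.mem_add.2 (Or.inr ?_)
    exact Multiset.mem_map.2 ⟨j.val, Multiset.mem_range.2 j.isLt, rfl⟩
  · intro hcon
    rw [hms1, hsplit1] at hcon
    exact h1 ((add_le_add_iff_left _).1 hcon)
  · intro hcon
    rw [hms2', hsplit2] at hcon
    exact h2 ((add_le_add_iff_left _).1 hcon)

lemma rigid {n : ℕ} [NeZero n] (vtx : ZMod n → V) (y : ZMod n) (k ℓ : ℕ) (hk : 0 < k)
    (g : ℕ → V) (hginj : ∀ i ≤ ℓ, ∀ j ≤ ℓ, g i = g j → i = j)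
    (hg0 : vtx y = g 0) (hgk : vtx (y + (k : ℕ)) = g ℓ)
    (hle : segMS vtx y k ≤ pathMS g ℓ) :
    k = ℓ ∧ ∀ s ≤ k, vtx (y + (s : ℕ)) = g s := by
  have main : ∀ s, s ≤ k → (vtx (y + (s : ℕ)) = g s ∧ s ≤ ℓ ∧
      segMS vtx (y + (s : ℕ)) (k - s) ≤ pathMS (fun i => g (s + i)) (ℓ - s)) := by
    intro s
    induction s with
    | zero =>
      intro _
      refine ⟨by simp only [Nat.cast_zero, add_zero]; exact hg0, Nat.zero_le _, ?_⟩
      have h1 : pathMS (fun i => g (0 + i)) (ℓ - 0) = pathMS g ℓ := by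
        unfold pathMS
        rw [Nat.sub_zero]
        exact Multiset.map_congr rfl (fun i _ => by
          show s(g (0 + i), g (0 + (i + 1))) = s(g i, g (i + 1))
          rw [Nat.zero_add, Nat.zero_add])
      have h2 : segMS vtx (y + ((0 : ℕ) : ZMod n)) (k - 0) = segMS vtx y k := by
        rw [Nat.sub_zero]; norm_num
      rw [h1, h2]; exact hle
    | succ s ih =>
      intro hs1
      obtain ⟨hv, hsl, hrec⟩ := ih (by omega)
      have hslt : s < ℓ := by
        rcases Nat.lt_or_ge s ℓ with h | h
        · exact h
        · exfalso
          have hseq : s = ℓ := by omega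
          rw [hseq, Nat.sub_self] at hrec
          have : pathMS (fun i => g (ℓ + i)) 0 = 0 := rfl
          rw [this, Multiset.le_zero] at hrec
          have := segMS_card vtx (y + ((ℓ : ℕ) : ZMod n)) (k - ℓ)
          rw [hrec] at this
          simp at this
          omega
      have hmem : s(vtx (y + (s : ℕ)), vtx (y + (s : ℕ) + 1)) ∈ pathMS (fun i => g (s + i)) (ℓ - s) :=
        Multiset.mem_of_le hrec (mem_segMS_first vtx _ (k - s) (by omega))
      obtain ⟨i, hi, hie⟩ := Multiset.mem_map.1 hmem
      have hilt : i < ℓ - s := Multiset.mem_range.1 hi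
      have hgsmem : g s ∈ s(g (s + i), g (s + (i + 1))) := by
        rw [hie, ← hv]
        exact Sym2.mem_mk_left _ _
      have hi0 : i = 0 := by
        rcases Sym2.mem_iff.1 hgsmem with h | h
        · have := hginj s (by omega) (s + i) (by omega) h
          omega
        · have := hginj s (by omega) (s + (i + 1)) (by omega) h
          omega
      rw [hi0] at hie
      have hie' : s(g s, g (s + 1)) = s(vtx (y + (s : ℕ)), vtx (y + (s : ℕ) + 1)) := by
        rw [← hie]
        norm_num
      have hnext : vtx (y + (s : ℕ) + 1) = g (s + 1) := by
        rw [← hv] at hie'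
        exact (Sym2.congr_right.1 hie').symm
      have hcast : y + ((s + 1 : ℕ) : ZMod n) = y + (s : ℕ) + 1 := by push_cast; ring
      refine ⟨by rw [hcast, hnext], by omega, ?_⟩
      have e1 := segMS_succ vtx (y + (s : ℕ)) (k - s - 1)
      rw [show 1 + (k - s - 1) = k - s by omega] at e1
      have e2 := pathMS_succ g s (ℓ - s - 1)
      rw [show 1 + (ℓ - s - 1) = ℓ - s by omega] at e2
      rw [e1, e2] at hrec
      rw [← hie'] at hrec
      have hrec2 := (Multiset.cons_le_cons_iff _).1 hrec
      have e3 : segMS vtx (y + ((s + 1 : ℕ) : ZMod n)) (k - (s + 1)) = segMS vtx (y + (s : ℕ) + 1) (k - s - 1) := by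
        rw [hcast, show k - (s + 1) = k - s - 1 by omega]
      have e4 : pathMS (fun i => g (s + 1 + i)) (ℓ - (s + 1)) = pathMS (fun i => g (s + 1 + i)) (ℓ - s - 1) := by
        rw [show ℓ - (s + 1) = ℓ - s - 1 by omega]
      rw [e3, e4]
      exact hrec2
  obtain ⟨hvk, hkl, _⟩ := main k le_rfl
  have : k = ℓ := hginj k hkl ℓ le_rfl (by rw [← hvk, hgk])
  exact ⟨this, fun s hs => (main s hs).1⟩

lemma rigid_rev {n : ℕ} [NeZero n] (vtx : ZMod n → V) (x : ZMod n) (k ℓ : ℕ) (hk : 0 < k)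
    (g : ℕ → V) (hginj : ∀ i ≤ ℓ, ∀ j ≤ ℓ, g i = g j → i = j)
    (hx : vtx x = g ℓ) (hxk : vtx (x + (k : ℕ)) = g 0)
    (hle : segMS vtx x k ≤ pathMS g ℓ) :
    k = ℓ ∧ ∀ s ≤ k, vtx (x + (s : ℕ)) = g (ℓ - s) := by
  have h := rigid vtx x k ℓ hk (fun i => g (ℓ - i))
    (fun i hi j hj hij => by
      have := hginj (ℓ - i) (by omega) (ℓ - j) (by omega) hij
      omega)
    (by show vtx x = g (ℓ - 0); rw [Nat.sub_zero]; exact hx)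
    (by show vtx (x + (k : ℕ)) = g (ℓ - ℓ); rw [Nat.sub_self]; exact hxk)
    (by rw [pathMS_reverse]; exact hle)
  exact h

lemma pathMS_snoc (g : ℕ → V) (m : ℕ) :
    pathMS g (m + 1) = pathMS g m + {s(g m, g (m + 1))} := by
  unfold pathMS
  rw [Multiset.range_add, Multiset.map_add, Multiset.map_map]
  congr 1

lemma segMS_snoc {n : ℕ} (vtx : ZMod n → V) (x : ZMod n) (m : ℕ) :
    segMS vtx x (m + 1) = segMS vtx x m + {s(vtx (x + (m : ℕ)), vtx (x + (m : ℕ) + 1))} := by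
  rw [segMS_add vtx x m 1]
  congr 1
  unfold segMS
  rw [show Multiset.range 1 = {0} from rfl]
  norm_num

lemma scheme_II {E : Set (Sym2 V)} {r : ℕ} (hr : 2 ≤ r) (vtx : ZMod (2 * r) → V)
    (hwalk : IsClosedWalk E vtx) (z : ZMod (2 * r))
    (hper : ∀ j : ZMod (2 * r), vtx (j + ((r : ℕ) : ZMod (2 * r))) = vtx j)
    (hnd : vtx z ≠ vtx (z + 1))
    (s₂ : ℕ) (hs₂ : s₂ < r)
    (hw1 : s(vtx (z + (s₂ : ℕ)), vtx (z + (s₂ : ℕ) + 1)) ≠ s(vtx z, vtx (z + 1)))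
    (hw2 : s(vtx (z + (s₂ : ℕ)), vtx (z + (s₂ : ℕ) + 1)) ≠ s(vtx (z + 1), vtx (z + 1 + 1))) :
    Decomposable E vtx := by
  classical
  haveI : NeZero (2 * r) := ⟨by omega⟩
  set f₀ : Sym2 V := s(vtx z, vtx (z + 1)) with hf₀
  set f₁ : Sym2 V := s(vtx (z + 1), vtx (z + 1 + 1)) with hf₁
  set T : Multiset (Sym2 V) := segMS vtx (z + ((2 : ℕ) : ZMod (2 * r))) (r - 2) with hT
  have hz2 : z + 1 + 1 = z + ((2 : ℕ) : ZMod (2 * r)) := by push_cast; ring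
  -- decomposition of segMS vtx z r
  have hS : segMS vtx z r = f₀ ::ₘ f₁ ::ₘ T := by
    have h1 := segMS_succ vtx z (r - 1)
    rw [show 1 + (r - 1) = r by omega] at h1
    have h2 := segMS_succ vtx (z + 1) (r - 2)
    rw [show 1 + (r - 2) = r - 1 by omega] at h2
    rw [h1, h2]
    congr 2
    rw [hz2]
  -- edgeMS vtx = 2 copies of segMS vtx z r
  have hvtx : edgeMS vtx = segMS vtx z r + segMS vtx z r := by
    have h1 := edgeMS_eq_segMS vtx z
    have h2 := segMS_add vtx z r r
    rw [show r + r = 2 * r by omega] at h2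
    have h3 : segMS vtx (z + ((r : ℕ) : ZMod (2 * r))) r = segMS vtx z r := by
      unfold segMS
      apply Multiset.map_congr rfl
      intro s _
      have e1 : z + ((r : ℕ) : ZMod (2 * r)) + (s : ℕ) = (z + (s : ℕ)) + ((r : ℕ) : ZMod (2 * r)) := by
        ring
      have e2 : z + ((r : ℕ) : ZMod (2 * r)) + (s : ℕ) + 1
          = (z + (s : ℕ) + 1) + ((r : ℕ) : ZMod (2 * r)) := by ring
      rw [e2, e1, hper, hper]
    rw [h1, h2, h3]
  -- w₁
  obtain ⟨hw1w, hms1, hpt1, hpt1'⟩ := glueW_spec (E := E) (2 * 2) 2 2 (by omega) (by omega) (by omega)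
    (fun s => vtx (z + (s : ℕ))) (fun s => vtx (z + ((2 - s : ℕ) : ZMod (2 * r))))
    (fun s hs => by
      show s(vtx (z + (s : ℕ)), vtx (z + ((s + 1 : ℕ) : ZMod (2 * r)))) ∈ E
      have hc : vtx (z + ((s + 1 : ℕ) : ZMod (2 * r))) = vtx (z + (s : ℕ) + 1) := by
        push_cast; ring_nf
      rw [hc]; exact hwalk _)
    (fun s hs => by
      show s(vtx (z + ((2 - s : ℕ) : ZMod (2 * r))), vtx (z + ((2 - (s + 1) : ℕ) : ZMod (2 * r)))) ∈ E
      rw [show 2 - s = (1 - s) + 1 by omega, show 2 - (s + 1) = 1 - s by omega]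
      have hc : vtx (z + (((1 - s) + 1 : ℕ) : ZMod (2 * r))) = vtx (z + ((1 - s : ℕ)) + 1) := by
        push_cast; ring_nf
      rw [hc, Sym2.eq_swap]
      exact hwalk _)
    (by show vtx (z + ((2 : ℕ) : ZMod (2 * r))) = vtx (z + ((2 - 0 : ℕ) : ZMod (2 * r))); norm_num)
    (by show vtx (z + ((2 - 2 : ℕ) : ZMod (2 * r))) = vtx (z + ((0 : ℕ) : ZMod (2 * r))); norm_num)
  have hms1' : edgeMS (glueW (2 * 2) 2 (fun s => vtx (z + (s : ℕ)))
      (fun s => vtx (z + ((2 - s : ℕ) : ZMod (2 * r)))))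
      = (f₀ ::ₘ f₁ ::ₘ 0) + (f₀ ::ₘ f₁ ::ₘ 0) := by
    rw [hms1]
    have e1 : pathMS (fun s => vtx (z + (s : ℕ))) 2 = f₀ ::ₘ f₁ ::ₘ 0 := by
      rw [pathMS_of_seg]
      have h1 := segMS_succ vtx z 1
      rw [show 1 + 1 = 2 by omega] at h1
      have h2 := segMS_succ vtx (z + 1) 0
      rw [show 1 + 0 = 1 by omega] at h2
      rw [h1, h2]
      rfl
    have e2 : pathMS (fun s => vtx (z + ((2 - s : ℕ) : ZMod (2 * r)))) 2
        = pathMS (fun s => vtx (z + (s : ℕ))) 2 := by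
      exact pathMS_reverse (fun s => vtx (z + (s : ℕ))) 2
    rw [e1, e2, e1]
  -- w₂
  set R : ℕ → V := fun i => if i = r - 1 then vtx (z + 1) else vtx (z + ((2 + i : ℕ) : ZMod (2 * r)))
    with hR
  have hRlast : R (r - 1) = vtx (z + 1) := by rw [hR]; simp
  have hRmid : ∀ i, i < r - 1 → R i = vtx (z + ((2 + i : ℕ) : ZMod (2 * r))) := by
    intro i hi; rw [hR]; simp only [if_neg (by omega : ¬ i = r - 1)]
  have hRr2 : R (r - 2) = vtx z := by
    rcases Nat.lt_or_ge (r - 2) (r - 1) with h | h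
    · rw [hRmid _ h, show 2 + (r - 2) = r by omega, hper]
    · omega
  have hzr1 : vtx (z + ((r + 1 : ℕ) : ZMod (2 * r))) = vtx (z + 1) := by
    have : z + ((r + 1 : ℕ) : ZMod (2 * r)) = (z + 1) + ((r : ℕ) : ZMod (2 * r)) := by
      push_cast; ring
    rw [this, hper]
  obtain ⟨hw2w, hms2, hpt2, hpt2'⟩ := glueW_spec (E := E) (2 * (r - 1)) (r - 1) (r - 1)
    (by omega) (by omega) (by omega)
    (fun s => R (r - 1 - s)) (fun s => vtx (z + ((2 + s : ℕ) : ZMod (2 * r))))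
    (fun s hs => by
      show s(R (r - 1 - s), R (r - 1 - (s + 1))) ∈ E
      rcases Nat.eq_zero_or_pos s with rfl | hspos
      · rw [show r - 1 - 0 = r - 1 by omega, show r - 1 - (0 + 1) = r - 2 by omega,
          hRlast, hRr2, Sym2.eq_swap]
        exact hwalk z
      · rw [hRmid (r - 1 - s) (by omega), hRmid (r - 1 - (s + 1)) (by omega)]
        rw [show 2 + (r - 1 - s) = (2 + (r - 1 - (s + 1))) + 1 by omega]
        have hc : vtx (z + (((2 + (r - 1 - (s + 1))) + 1 : ℕ) : ZMod (2 * r)))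
            = vtx (z + ((2 + (r - 1 - (s + 1)) : ℕ) : ZMod (2 * r)) + 1) := by
          push_cast; ring_nf
        rw [hc, Sym2.eq_swap]
        exact hwalk _)
    (fun s hs => by
      show s(vtx (z + ((2 + s : ℕ) : ZMod (2 * r))), vtx (z + ((2 + (s + 1) : ℕ) : ZMod (2 * r)))) ∈ E
      have hc : vtx (z + ((2 + (s + 1) : ℕ) : ZMod (2 * r)))
          = vtx (z + ((2 + s : ℕ) : ZMod (2 * r)) + 1) := by
        push_cast; ring_nf
      rw [hc]; exact hwalk _)
    (by
      show R (r - 1 - (r - 1)) = vtx (z + ((2 + 0 : ℕ) : ZMod (2 * r)))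
      rw [show r - 1 - (r - 1) = 0 by omega, hRmid 0 (by omega)])
    (by
      show vtx (z + ((2 + (r - 1) : ℕ) : ZMod (2 * r))) = R (r - 1 - 0)
      rw [show 2 + (r - 1) = r + 1 by omega, show r - 1 - 0 = r - 1 by omega, hRlast, hzr1])
  have hTsnoc : segMS vtx (z + ((2 : ℕ) : ZMod (2 * r))) (r - 1) = T + {f₀} := by
    have h := segMS_snoc vtx (z + ((2 : ℕ) : ZMod (2 * r))) (r - 2)
    rw [show r - 2 + 1 = r - 1 by omega] at h
    have e2 : vtx (z + ((2 : ℕ) : ZMod (2 * r)) + ((r - 2 : ℕ) : ZMod (2 * r)) + 1)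
        = vtx (z + 1) := by
      have ee : z + ((2 : ℕ) : ZMod (2 * r)) + ((r - 2 : ℕ) : ZMod (2 * r)) + 1
          = (z + 1) + ((r : ℕ) : ZMod (2 * r)) := by
        rw [add_assoc z, ← Nat.cast_add, show 2 + (r - 2) = r by omega]
        ring
      rw [ee, hper]
    have e1 : vtx (z + ((2 : ℕ) : ZMod (2 * r)) + ((r - 2 : ℕ) : ZMod (2 * r))) = vtx z := by
      have ee : z + ((2 : ℕ) : ZMod (2 * r)) + ((r - 2 : ℕ) : ZMod (2 * r))
          = z + ((r : ℕ) : ZMod (2 * r)) := by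
        rw [add_assoc z, ← Nat.cast_add, show 2 + (r - 2) = r by omega]
      rw [ee, hper]
    rw [h, hT, e2, e1]
  have hms2' : edgeMS (glueW (2 * (r - 1)) (r - 1) (fun s => R (r - 1 - s))
      (fun s => vtx (z + ((2 + s : ℕ) : ZMod (2 * r)))))
      = (T + {f₀}) + (T + {f₀}) := by
    rw [hms2]
    have e1 : pathMS (fun s => R (r - 1 - s)) (r - 1) = pathMS R (r - 1) :=
      pathMS_reverse R (r - 1)
    have e2 : pathMS R (r - 1) = T + {f₀} := by
      have h := pathMS_snoc R (r - 2)
      rw [show r - 2 + 1 = r - 1 by omega] at h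
      rw [h, hRr2, hRlast]
      congr 1
      rw [hT]
      unfold pathMS segMS
      apply Multiset.map_congr rfl
      intro i hi
      have hilt : i < r - 2 := Multiset.mem_range.1 hi
      show s(R i, R (i + 1)) = _
      rw [hRmid i (by omega), hRmid (i + 1) (by omega)]
      have c1 : z + ((2 + i : ℕ) : ZMod (2 * r)) = z + ((2 : ℕ) : ZMod (2 * r)) + (i : ℕ) := by
        push_cast; ring
      have c2 : z + ((2 + (i + 1) : ℕ) : ZMod (2 * r))
          = z + ((2 : ℕ) : ZMod (2 * r)) + (i : ℕ) + 1 := by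
        push_cast; ring
      rw [c1, c2]
    have e3 : pathMS (fun s => vtx (z + ((2 + s : ℕ) : ZMod (2 * r)))) (r - 1) = T + {f₀} := by
      rw [← hTsnoc]
      unfold pathMS segMS
      apply Multiset.map_congr rfl
      intro i _
      show s(vtx (z + ((2 + i : ℕ) : ZMod (2 * r))), vtx (z + ((2 + (i + 1) : ℕ) : ZMod (2 * r)))) = _
      have c1 : z + ((2 + i : ℕ) : ZMod (2 * r)) = z + ((2 : ℕ) : ZMod (2 * r)) + (i : ℕ) := by
        push_cast; ring
      have c2 : z + ((2 + (i + 1) : ℕ) : ZMod (2 * r))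
          = z + ((2 : ℕ) : ZMod (2 * r)) + (i : ℕ) + 1 := by
        push_cast; ring
      rw [c1, c2]
    rw [e1, e2, e3]
  have hmapun : Finset.univ.val.map (fun _ : Fin 1 => f₀) = {f₀} := by
    have h1 : Finset.univ.val.map (fun _ : Fin 1 => f₀)
        = (Finset.univ.val.map (Fin.val : Fin 1 → ℕ)).map (fun _ => f₀) := by
      rw [Multiset.map_map]; rfl
    rw [h1, fin_univ_val_map 1]
    rfl
  -- the f₀-witness edge of segMS vtx z r at position s₂
  have hfs₂ : s(vtx (z + (s₂ : ℕ)), vtx (z + (s₂ : ℕ) + 1)) ∈ segMS vtx z r :=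
    Multiset.mem_map.2 ⟨s₂, Multiset.mem_range.2 hs₂, rfl⟩
  refine ⟨1, fun _ => f₀, by omega,
    fun _ => hwalk z,
    fun _ => by rw [hf₀, Sym2.mk_isDiag_iff]; exact hnd,
    fun _ w hw => by
      rcases Sym2.mem_iff.1 hw with h | h
      · exact ⟨z, h.symm⟩
      · exact ⟨z + 1, h.symm⟩,
    2, r - 1, _, _, by omega, by omega, by omega, by omega, hw1w, hw2w,
    ⟨vtx (z + ((2 : ℕ) : ZMod (2 * r))), ⟨_, by rw [hpt1]⟩, ⟨_, by rw [hpt2]⟩⟩,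
    ?_, ?_, ?_, ?_, ?_⟩
  · rw [hms1', hms2', hmapun, hvtx, hS, two_nsmul]
    simp only [← Multiset.singleton_add]
    abel
  · intro j
    rw [hms1']
    exact Multiset.mem_add.2 (Or.inl (Multiset.mem_cons_self _ _))
  · intro j
    rw [hms2']
    refine Multiset.mem_add.2 (Or.inl (Multiset.mem_add.2 (Or.inr ?_)))
    exact Multiset.mem_singleton.2 rfl
  · intro hcon
    rw [hms1', hvtx] at hcon
    have hcnt := Multiset.le_iff_count.1 hcon (s(vtx (z + (s₂ : ℕ)), vtx (z + (s₂ : ℕ) + 1)))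
    have hpos : 0 < Multiset.count (s(vtx (z + (s₂ : ℕ)), vtx (z + (s₂ : ℕ) + 1))) (segMS vtx z r) :=
      Multiset.count_pos.2 hfs₂
    rw [Multiset.count_add, Multiset.count_add] at hcnt
    have hz1 : Multiset.count (s(vtx (z + (s₂ : ℕ)), vtx (z + (s₂ : ℕ) + 1))) (f₀ ::ₘ f₁ ::ₘ 0) = 0 := by
      rw [Multiset.count_eq_zero]
      intro hmem
      rcases Multiset.mem_cons.1 hmem with h | h
      · exact hw1 h
      · rcases Multiset.mem_cons.1 h with h' | h'
        · exact hw2 h'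
        · exact absurd h' (Multiset.notMem_zero _)
    rw [hz1] at hcnt
    omega
  · intro hcon
    rw [hms2', hvtx, hS] at hcon
    have key : (f₀ ::ₘ f₁ ::ₘ T) + (f₀ ::ₘ f₁ ::ₘ T) = ((T + {f₀}) + (T + {f₀})) + ({f₁} + {f₁}) := by
      simp only [← Multiset.singleton_add]
      abel
    rw [key] at hcon
    have := (add_le_add_iff_left ((T + {f₀}) + (T + {f₀}))).1
      (by rw [add_zero]; exact hcon : ((T + {f₀}) + (T + {f₀})) + ({f₁} + {f₁}) ≤ ((T + {f₀}) + (T + {f₀})) + 0)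
    have hcard := Multiset.card_le_card this
    simp at hcard

section Arcs

lemma zmod_val_pos {n : ℕ} [NeZero n] {x : ZMod n} (h : x ≠ 0) : 0 < x.val :=
  Nat.pos_of_ne_zero (fun hc => h (by rwa [← ZMod.val_eq_zero]))

lemma add_cast_val {n : ℕ} [NeZero n] (x y : ZMod n) : x + (((y - x).val : ℕ) : ZMod n) = y := by
  rw [ZMod.natCast_rightInverse (y - x)]
  ring

lemma val_compl {n : ℕ} [NeZero n] {x y : ZMod n} (h : x ≠ y) :
    (y - x).val + (x - y).val = n := by
  have h1 : x - y = -(y - x) := by ring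
  rw [h1, ZMod.neg_val, if_neg (sub_ne_zero.2 (fun hc => h hc.symm))]
  have := ZMod.val_lt (y - x)
  have h2 : (y - x).val ≠ 0 := fun hc =>
    (sub_ne_zero.2 (fun hcc => h hcc.symm)) (by rwa [← ZMod.val_eq_zero])
  omega

lemma val_parity_add {n : ℕ} [NeZero n] (hn : n % 2 = 0) (a b c : ZMod n) (h : a = b + c) :
    a.val % 2 = (b.val + c.val) % 2 := by
  rw [h, ZMod.val_add]
  exact Nat.mod_mod_of_dvd _ (by omega)

lemma odd_gap {r : ℕ} (hr : 0 < r) (vtx : ZMod (2 * r) → V) (hns : NonSplit vtx)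
    {x y : ZMod (2 * r)} (hxy : x ≠ y) (hval : vtx x = vtx y) : (y - x).val % 2 = 1 := by
  haveI : NeZero (2 * r) := ⟨by omega⟩
  by_contra h
  have h0 : (y - x).val % 2 = 0 := by omega
  have hpos : 0 < (y - x).val := zmod_val_pos (sub_ne_zero.2 (fun hc => hxy hc.symm))
  have hlt : (y - x).val < 2 * r := ZMod.val_lt _
  obtain ⟨s, hs⟩ : ∃ s, (y - x).val = 2 * s := ⟨(y - x).val / 2, by omega⟩
  refine hns ⟨x, s, by omega, by omega, ?_⟩
  rw [← hs, add_cast_val x y]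
  exact hval

/-- an injective path from `v` to `u` whose edges lie in `E` and whose
vertices lie on the walk -/
structure Arc (E : Set (Sym2 V)) {n : ℕ} (vtx : ZMod n → V) (u v : V) where
  t : ℕ
  ht : 0 < t
  g : ℕ → V
  g0 : g 0 = v
  gt : g t = u
  inj : ∀ i ≤ t, ∀ j ≤ t, g i = g j → i = j
  mem : ∀ s < t, s(g s, g (s + 1)) ∈ E
  rng : ∀ s ≤ t, g s ∈ Set.range vtx

/-- reversal of an arc -/
def Arc.rev {E : Set (Sym2 V)} {n : ℕ} {vtx : ZMod n → V} {u v : V} (A : Arc E vtx u v) :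
    Arc E vtx v u where
  t := A.t
  ht := A.ht
  g := fun i => A.g (A.t - i)
  g0 := by simp only [Nat.sub_zero]; exact A.gt
  gt := by simp only [Nat.sub_self]; exact A.g0
  inj := fun i hi j hj h => by
    have := A.inj (A.t - i) (by omega) (A.t - j) (by omega) h
    omega
  mem := fun s hs => by
    show s(A.g (A.t - s), A.g (A.t - (s + 1))) ∈ E
    rw [show A.t - s = (A.t - (s + 1)) + 1 by omega, Sym2.eq_swap]
    exact A.mem _ (by omega)
  rng := fun s hs => A.rng _ (by omega)

/-- the two possible rigidity outcomes of a failed decomposition attempt -/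
def Dis {E : Set (Sym2 V)} {r : ℕ} (vtx : ZMod (2 * r) → V) {u v : V}
    (x y : ZMod (2 * r)) (C : Arc E vtx u v) : Prop :=
  ((x - y).val = C.t ∧ ∀ s ≤ C.t, vtx (y + (s : ℕ)) = C.g s)
  ∨ ((y - x).val = C.t ∧ ∀ s ≤ C.t, vtx (x + (s : ℕ)) = C.g (C.t - s))

lemma dis_swap {E : Set (Sym2 V)} {r : ℕ} {vtx : ZMod (2 * r) → V} {u v : V}
    {x y : ZMod (2 * r)} {C : Arc E vtx u v} (h : Dis vtx x y C) : Dis vtx y x C.rev := by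
  rcases h with ⟨h1, h2⟩ | ⟨h1, h2⟩
  · right
    exact ⟨h1, fun s hs => by
      have hs' : s ≤ C.t := hs
      show vtx (y + (s : ℕ)) = C.g (C.t - (C.t - s))
      rw [show C.t - (C.t - s) = s by omega]
      exact h2 s hs'⟩
  · left
    exact ⟨h1, fun s hs => h2 s hs⟩

lemma bad_elim {E : Set (Sym2 V)} {r : ℕ} (hr : 0 < r) (vtx : ZMod (2 * r) → V) {u v : V}
    (huv : u ≠ v) (C : Arc E vtx u v) (x y : ZMod (2 * r)) (hx : vtx x = u) (hy : vtx y = v)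
    (hbad : segMS vtx y ((x - y).val) ≤ pathMS C.g C.t
      ∨ segMS vtx x ((y - x).val) ≤ pathMS C.g C.t) :
    Dis vtx x y C := by
  haveI : NeZero (2 * r) := ⟨by omega⟩
  have hxy : x ≠ y := fun h => huv (by rw [← hx, h, hy])
  rcases hbad with hb | hb
  · left
    have hk : 0 < (x - y).val := zmod_val_pos (sub_ne_zero.2 hxy)
    have h := rigid vtx y _ C.t hk C.g C.inj (by rw [hy, C.g0])
      (by rw [add_cast_val y x, hx, C.gt]) hb
    exact ⟨h.1, by rw [h.1] at h; exact h.2⟩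
  · right
    have hk : 0 < (y - x).val := zmod_val_pos (sub_ne_zero.2 hxy.symm)
    have h := rigid_rev vtx x _ C.t hk C.g C.inj (by rw [hx, C.gt])
      (by rw [add_cast_val x y, hy, C.g0]) hb
    exact ⟨h.1, by rw [h.1] at h; exact h.2⟩

lemma combo_or {E : Set (Sym2 V)} {r : ℕ} (hr : 0 < r) (vtx : ZMod (2 * r) → V)
    (hwalk : IsClosedWalk E vtx) {u v : V} (huv : u ≠ v) (C : Arc E vtx u v)
    (x y : ZMod (2 * r)) (hx : vtx x = u) (hy : vtx y = v)
    (hpar : ((y - x).val + C.t) % 2 = 0) :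
    Decomposable E vtx ∨ Dis vtx x y C := by
  haveI : NeZero (2 * r) := ⟨by omega⟩
  have hxy : x ≠ y := fun h => huv (by rw [← hx, h, hy])
  by_cases h1 : segMS vtx y ((x - y).val) ≤ pathMS C.g C.t
  · exact Or.inr (bad_elim hr vtx huv C x y hx hy (Or.inl h1))
  by_cases h2 : segMS vtx x ((y - x).val) ≤ pathMS C.g C.t
  · exact Or.inr (bad_elim hr vtx huv C x y hx hy (Or.inr h2))
  refine Or.inl (scheme_I hr vtx hwalk x ((y - x).val)
    (zmod_val_pos (sub_ne_zero.2 hxy.symm)) (ZMod.val_lt _) C.t C.ht C.g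
    (by rw [add_cast_val x y, hy, C.g0])
    (by rw [hx, C.gt])
    C.mem
    (fun s hs hc => by have := C.inj s (by omega) (s + 1) (by omega) hc; omega)
    C.rng
    hpar ?_ ?_)
  · rw [add_cast_val x y]
    have hc : 2 * r - (y - x).val = (x - y).val := by
      have := val_compl hxy
      omega
    rw [hc]
    exact h1
  · exact h2

lemma even_case {E : Set (Sym2 V)} {r : ℕ} (hr : 0 < r) (vtx : ZMod (2 * r) → V)
    {u v : V} (huv : u ≠ v)
    (p p' q : ZMod (2 * r)) (hp : vtx p = u) (hp' : vtx p' = u) (hpp' : p ≠ p') (hq : vtx q = v)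
    (A B : Arc E vtx u v)
    (hkey : ∀ i ≤ A.t, ∀ j ≤ B.t, A.g i = B.g j → (i = 0 ∧ j = 0) ∨ (i = A.t ∧ j = B.t))
    (hnot2 : ¬ (A.t = 1 ∧ B.t = 1))
    (disA : Dis vtx p q A) (disB : Dis vtx p q B) : False := by
  haveI : NeZero (2 * r) := ⟨by omega⟩
  have hpq : p ≠ q := fun h => huv (by rw [← hp, h, hq])
  have hp'q : p' ≠ q := fun h => huv (by rw [← hp', h, hq])
  rcases disA with ⟨hk1, t1⟩ | ⟨hk1, t1⟩ <;> rcases disB with ⟨hk2, t2⟩ | ⟨hk2, t2⟩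
  · -- both type 1
    have h11 : A.g 1 = B.g 1 := by rw [← t1 1 A.ht, ← t2 1 B.ht]
    rcases hkey 1 A.ht 1 B.ht h11 with ⟨h, _⟩ | ⟨h1, h2⟩
    · omega
    · exact hnot2 ⟨h1.symm, h2.symm⟩
  · -- A type 1, B type 2
    have hsum : A.t + B.t = 2 * r := by
      rw [← hk1, ← hk2]; exact val_compl hpq.symm
    set k' := (p' - q).val with hk'
    have hk'pos : 0 < k' := zmod_val_pos (sub_ne_zero.2 hp'q)
    have hk'lt : k' < 2 * r := ZMod.val_lt _
    have hqk' : q + (k' : ℕ) = p' := add_cast_val q p'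
    have hqp : q + ((A.t : ℕ) : ZMod (2 * r)) = p := by rw [← hk1]; exact add_cast_val q p
    rcases le_or_gt k' A.t with h | h
    · have ht := t1 k' h
      rw [hqk', hp'] at ht
      have he := A.inj k' h A.t le_rfl (by rw [← ht, A.gt])
      apply hpp'
      rw [← hqp, ← hqk', he]
    · set s' := k' - A.t with hs'
      have hps' : p + ((s' : ℕ) : ZMod (2 * r)) = p' := by
        rw [← hqp, ← hqk', show k' = A.t + s' by omega]
        push_cast
        ring
      have ht := t2 s' (by omega)
      rw [hps', hp'] at ht
      have := B.inj (B.t - s') (by omega) B.t le_rfl (by rw [← ht, B.gt])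
      omega
  · -- A type 2, B type 1
    have hsum : A.t + B.t = 2 * r := by
      rw [← hk1, ← hk2]; exact val_compl hpq
    set k' := (p' - p).val with hk'
    have hk'pos : 0 < k' := zmod_val_pos (sub_ne_zero.2 (Ne.symm hpp'))
    have hk'lt : k' < 2 * r := ZMod.val_lt _
    have hpk' : p + (k' : ℕ) = p' := add_cast_val p p'
    have hpq2 : p + ((A.t : ℕ) : ZMod (2 * r)) = q := by rw [← hk1]; exact add_cast_val p q
    rcases le_or_gt k' A.t with h | h
    · have ht := t1 k' h
      rw [hpk', hp'] at ht
      have := A.inj (A.t - k') (by omega) A.t le_rfl (by rw [← ht, A.gt])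
      omega
    · set s' := k' - A.t with hs'
      have hqs' : q + ((s' : ℕ) : ZMod (2 * r)) = p' := by
        rw [← hpq2, ← hpk', show k' = A.t + s' by omega]
        push_cast
        ring
      have ht := t2 s' (by omega)
      rw [hqs', hp'] at ht
      have := B.inj s' (by omega) B.t le_rfl (by rw [← ht, B.gt])
      omega
  · -- both type 2
    have h11 : A.g (A.t - 1) = B.g (B.t - 1) := by
      rw [← t1 1 A.ht, ← t2 1 B.ht]
    rcases hkey (A.t - 1) (by omega) (B.t - 1) (by omega) h11 with ⟨ha, hb⟩ | ⟨ha, _⟩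
    · refine hnot2 ⟨?_, ?_⟩ <;> [have := A.ht; have := B.ht] <;> omega
    · have := A.ht
      omega

lemma odd_core {E : Set (Sym2 V)} {r : ℕ} (hr : 2 ≤ r) (vtx : ZMod (2 * r) → V)
    (hwalk : IsClosedWalk E vtx) (hns : NonSplit vtx) {u v : V} (huv : u ≠ v)
    (p p' q q' : ZMod (2 * r)) (hp : vtx p = u) (hp' : vtx p' = u) (hpp' : p ≠ p')
    (hq : vtx q = v) (hq' : vtx q' = v) (hqq' : q ≠ q')
    (A B : Arc E vtx u v)
    (hkey : ∀ i ≤ A.t, ∀ j ≤ B.t, A.g i = B.g j → (i = 0 ∧ j = 0) ∨ (i = A.t ∧ j = B.t))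
    (hnot2 : ¬ (A.t = 1 ∧ B.t = 1))
    (hk1 : (p - q).val = A.t) (t1 : ∀ s ≤ A.t, vtx (q + (s : ℕ)) = A.g s)
    (dis2 : Dis vtx p q' B) (dis3 : Dis vtx p' q B) (dis4 : Dis vtx p' q' A) :
    Decomposable E vtx := by
  haveI : NeZero (2 * r) := ⟨by omega⟩
  have e1 : q + ((A.t : ℕ) : ZMod (2 * r)) = p := by rw [← hk1]; exact add_cast_val q p
  -- eliminate type-1 of dis2
  obtain ⟨hk2, t2⟩ : (q' - p).val = B.t ∧ ∀ s ≤ B.t, vtx (p + (s : ℕ)) = B.g (B.t - s) := by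
    rcases dis2 with ⟨hk2, t2⟩ | h
    · exfalso
      have e2 : q' + ((B.t : ℕ) : ZMod (2 * r)) = p := by rw [← hk2]; exact add_cast_val q' p
      rcases lt_trichotomy A.t B.t with h | h | h
      · have hδ : q' + ((B.t - A.t : ℕ) : ZMod (2 * r)) = q := by
          have hx : q' + ((B.t - A.t : ℕ) : ZMod (2 * r)) + ((A.t : ℕ) : ZMod (2 * r))
              = q + ((A.t : ℕ) : ZMod (2 * r)) := by
            rw [e1, add_assoc, ← Nat.cast_add, show B.t - A.t + A.t = B.t by omega, e2]
          exact add_right_cancel hx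
        have ht := t2 (B.t - A.t) (by omega)
        rw [hδ, hq] at ht
        have := B.inj (B.t - A.t) (by omega) 0 (by omega) (by rw [← ht, B.g0])
        omega
      · apply hqq'
        have e2' := e2
        rw [← h] at e2'
        exact add_right_cancel (e1.trans e2'.symm)
      · have hδ : q + ((A.t - B.t : ℕ) : ZMod (2 * r)) = q' := by
          have hx : q + ((A.t - B.t : ℕ) : ZMod (2 * r)) + ((B.t : ℕ) : ZMod (2 * r))
              = q' + ((B.t : ℕ) : ZMod (2 * r)) := by
            rw [e2, add_assoc, ← Nat.cast_add, show A.t - B.t + B.t = A.t by omega, e1]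
          exact add_right_cancel hx
        have ht := t1 (A.t - B.t) (by omega)
        rw [hδ, hq'] at ht
        have := A.inj (A.t - B.t) (by omega) 0 (by omega) (by rw [← ht, A.g0])
        omega
    · exact h
  obtain ⟨hk3, t3⟩ : (q - p').val = B.t ∧ ∀ s ≤ B.t, vtx (p' + (s : ℕ)) = B.g (B.t - s) := by
    rcases dis3 with ⟨hk3, t3⟩ | h
    · exfalso
      have h11 : A.g 1 = B.g 1 := by rw [← t1 1 A.ht, ← t3 1 B.ht]
      rcases hkey 1 A.ht 1 B.ht h11 with ⟨h0, _⟩ | ⟨h1, h2⟩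
      · omega
      · exact hnot2 ⟨h1.symm, h2.symm⟩
    · exact h
  obtain ⟨hk4, t4⟩ : (p' - q').val = A.t ∧ ∀ s ≤ A.t, vtx (q' + (s : ℕ)) = A.g s := by
    rcases dis4 with h | ⟨hk4, t4⟩
    · exact h
    · exfalso
      have h11 : A.g (A.t - 1) = B.g (B.t - 1) := by rw [← t4 1 A.ht, ← t3 1 B.ht]
      rcases hkey (A.t - 1) (by omega) (B.t - 1) (by omega) h11 with ⟨ha, hb⟩ | ⟨ha, _⟩
      · exact hnot2 ⟨by have := A.ht; omega, by have := B.ht; omega⟩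
      · have := A.ht; omega
  -- positions
  have e2 : p + ((B.t : ℕ) : ZMod (2 * r)) = q' := by rw [← hk2]; exact add_cast_val p q'
  have e4 : q' + ((A.t : ℕ) : ZMod (2 * r)) = p' := by rw [← hk4]; exact add_cast_val q' p'
  have e3 : p' + ((B.t : ℕ) : ZMod (2 * r)) = q := by rw [← hk3]; exact add_cast_val p' q
  set L := A.t + B.t with hL
  have hcL : ((L : ℕ) : ZMod (2 * r)) = ((A.t : ℕ) : ZMod (2 * r)) + ((B.t : ℕ) : ZMod (2 * r)) := by
    rw [hL, Nat.cast_add]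
  have hc2L : ((2 * L : ℕ) : ZMod (2 * r))
      = ((L : ℕ) : ZMod (2 * r)) + ((L : ℕ) : ZMod (2 * r)) := by
    rw [show 2 * L = L + L by ring, Nat.cast_add]
  have hq'L : q + ((L : ℕ) : ZMod (2 * r)) = q' := by rw [hcL, ← e2, ← e1]; ring
  have hp'L : p + ((L : ℕ) : ZMod (2 * r)) = p' := by rw [hcL, ← e4, ← e2]; ring
  have hcyc : q + ((2 * L : ℕ) : ZMod (2 * r)) = q := by
    conv_rhs => rw [← e3, ← e4, ← e2, ← e1]
    rw [hc2L, hcL]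
    ring
  have h2L0 : ((2 * L : ℕ) : ZMod (2 * r)) = 0 := by
    have hx : ((2 * L : ℕ) : ZMod (2 * r)) = (q + ((2 * L : ℕ) : ZMod (2 * r))) - q := by ring
    rw [hx, hcyc, sub_self]
  have hdvd : (2 * r) ∣ 2 * L := (ZMod.natCast_eq_zero_iff _ _).1 h2L0
  obtain ⟨m, hm⟩ := hdvd
  have hLrm : L = r * m := by
    have hm' : 2 * L = 2 * (r * m) := by rw [hm]; ring
    exact Nat.eq_of_mul_eq_mul_left (by norm_num) hm'
  have hAlt : A.t < 2 * r := by rw [← hk1]; exact ZMod.val_lt _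
  have hBlt : B.t < 2 * r := by rw [← hk2]; exact ZMod.val_lt _
  have hL2 : 2 ≤ L := by have := A.ht; have := B.ht; omega
  have hm0 : m ≠ 0 := by intro h0; rw [h0, mul_zero] at hLrm; omega
  have hm4 : m < 4 := by
    by_contra hcon
    have h4 : 4 * r ≤ L := by
      calc 4 * r = r * 4 := by ring
        _ ≤ r * m := Nat.mul_le_mul_left _ (by omega)
        _ = L := hLrm.symm
    omega
  have hLger : r ≤ L := by
    calc r = r * 1 := by ring
      _ ≤ r * m := Nat.mul_le_mul_left _ (by omega)
      _ = L := hLrm.symm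
  have hm2 : m ≠ 2 := by
    intro h2
    apply hpp'
    have hzero : ((L : ℕ) : ZMod (2 * r)) = 0 := by
      rw [hLrm, h2, show r * 2 = 2 * r by ring]
      exact ZMod.natCast_self _
    have := hp'L
    rw [hzero, add_zero] at this
    exact this
  have hLr : ((L : ℕ) : ZMod (2 * r)) = ((r : ℕ) : ZMod (2 * r)) := by
    rcases (show m = 1 ∨ m = 3 by omega) with h1 | h3
    · rw [hLrm, h1, mul_one]
    · rw [hLrm, h3, show r * 3 = r + 2 * r by ring, Nat.cast_add, ZMod.natCast_self, add_zero]
  -- periodicity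
  have per0 : ∀ k, k ≤ L → vtx (q + (k : ℕ) + ((L : ℕ) : ZMod (2 * r))) = vtx (q + (k : ℕ)) := by
    intro k hk
    rcases le_or_gt k A.t with h | h
    · have hrw : q + (k : ℕ) + ((L : ℕ) : ZMod (2 * r)) = q' + (k : ℕ) := by
        rw [← hq'L]; ring
      rw [hrw, t4 k h, t1 k h]
    · have hrw1 : q + ((k : ℕ) : ZMod (2 * r)) = p + ((k - A.t : ℕ) : ZMod (2 * r)) := by
        rw [← e1, add_assoc, ← Nat.cast_add, show A.t + (k - A.t) = k by omega]
      have hs : k - A.t ≤ B.t := by omega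
      rw [hrw1]
      have hrw2 : p + ((k - A.t : ℕ) : ZMod (2 * r)) + ((L : ℕ) : ZMod (2 * r))
          = p' + ((k - A.t : ℕ) : ZMod (2 * r)) := by
        rw [← hp'L]; ring
      rw [hrw2, t3 _ hs, t2 _ hs]
  have per1 : ∀ k, k < 2 * r → vtx (q + (k : ℕ) + ((L : ℕ) : ZMod (2 * r))) = vtx (q + (k : ℕ)) := by
    intro k hk
    rcases le_or_gt k L with h | h
    · exact per0 k h
    · have hk₂le : k - L ≤ L := by omega
      have hrw : q + ((k - L : ℕ) : ZMod (2 * r)) + ((L : ℕ) : ZMod (2 * r))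
          = q + ((k : ℕ) : ZMod (2 * r)) := by
        rw [add_assoc, ← Nat.cast_add, show (k - L) + L = k by omega]
      rw [← hrw]
      have hrw2 : q + ((k - L : ℕ) : ZMod (2 * r)) + ((L : ℕ) : ZMod (2 * r)) + ((L : ℕ) : ZMod (2 * r))
          = q + ((k - L : ℕ) : ZMod (2 * r)) := by
        rw [add_assoc (q + ((k - L : ℕ) : ZMod (2 * r))), ← Nat.cast_add,
          show L + L = 2 * L by ring, h2L0, add_zero]
      rw [hrw2, per0 _ hk₂le]
  have hper : ∀ j : ZMod (2 * r), vtx (j + ((r : ℕ) : ZMod (2 * r))) = vtx j := by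
    intro j
    have hpp := per1 (j - q).val (ZMod.val_lt _)
    rw [add_cast_val q j, hLr] at hpp
    exact hpp
  -- r is odd, hence at least 3
  have hrodd : r % 2 = 1 := by
    by_contra hcon
    refine hns ⟨q, r / 2, by omega, by omega, ?_⟩
    rw [show 2 * (r / 2) = r by omega]
    exact (hper q).symm
  have hr3 : 3 ≤ r := by omega
  -- values along the period
  have hv2 : ∀ s, A.t ≤ s → s ≤ L → vtx (q + (s : ℕ)) = B.g (B.t - (s - A.t)) := by
    intro s h1 h2
    have hrw : q + ((s : ℕ) : ZMod (2 * r)) = p + ((s - A.t : ℕ) : ZMod (2 * r)) := by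
      rw [← e1, add_assoc, ← Nat.cast_add, show A.t + (s - A.t) = s by omega]
    rw [hrw]
    exact t2 _ (by omega)
  have c1 : q + 1 = q + ((1 : ℕ) : ZMod (2 * r)) := by norm_num
  have c2 : q + 1 + 1 = q + ((2 : ℕ) : ZMod (2 * r)) := by push_cast; ring
  have c3 : q + ((2 : ℕ) : ZMod (2 * r)) + 1 = q + ((3 : ℕ) : ZMod (2 * r)) := by push_cast; ring
  have V0 : vtx q = A.g 0 := by rw [hq]; exact A.g0.symm
  have V1 : vtx (q + 1) = A.g 1 := by rw [c1]; exact t1 1 A.ht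
  have hnd : vtx q ≠ vtx (q + 1) := by
    rw [V0, V1]
    intro hcon
    have := A.inj 0 (by omega) 1 A.ht hcon
    omega
  have hL3 : 3 ≤ L := by omega
  -- witness edge at position 2
  refine scheme_II hr vtx hwalk q hper hnd 2 (by omega) ?_ ?_
  -- two inequalities, by cases on A.t
  all_goals {
    have kinj : ∀ i ≤ A.t, ∀ j ≤ A.t, i ≠ j → A.g i ≠ A.g j := by
      intro i hi j hj hne hc
      exact hne (A.inj i hi j hj hc)
    rcases (show 3 ≤ A.t ∨ A.t = 2 ∨ A.t = 1 by have := A.ht; omega) with hA | hA | hA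
    · have V2 : vtx (q + ((2 : ℕ) : ZMod (2 * r))) = A.g 2 := t1 2 (by omega)
      have V3 : vtx (q + ((2 : ℕ) : ZMod (2 * r)) + 1) = A.g 3 := by rw [c3]; exact t1 3 (by omega)
      intro hcon
      simp only [c2, V2, V3, V0, V1] at hcon
      rcases Sym2.eq_iff.1 hcon with ⟨ha, hb⟩ | ⟨ha, hb⟩ <;>
        first
          | exact kinj 2 (by omega) 0 (by omega) (by omega) ha
          | exact kinj 2 (by omega) 1 (by omega) (by omega) ha
          | exact kinj 3 (by omega) 1 (by omega) (by omega) hb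
    · have kB1 : B.g (B.t - 1) ≠ A.g 1 := by
        intro h
        rcases hkey 1 A.ht (B.t - 1) (by omega) h.symm with ⟨h1, h2⟩ | ⟨h1, h2⟩ <;> omega
      have V2 : vtx (q + ((2 : ℕ) : ZMod (2 * r))) = A.g 2 := t1 2 (by omega)
      have V3 : vtx (q + ((2 : ℕ) : ZMod (2 * r)) + 1) = B.g (B.t - 1) := by
        rw [c3, hv2 3 (by omega) (by omega), hA]
      intro hcon
      simp only [c2, V2, V3, V0, V1] at hcon
      rcases Sym2.eq_iff.1 hcon with ⟨ha, hb⟩ | ⟨ha, hb⟩ <;>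
        first
          | exact kinj 2 (by omega) 0 (by omega) (by omega) ha
          | exact kinj 2 (by omega) 1 (by omega) (by omega) ha
          | exact kB1 hb
          | exact kB1 ha
    · have hBt2 : 2 ≤ B.t := by omega
      have hAgu : A.g 1 = B.g B.t := by
        have h1 : A.g 1 = u := hA ▸ A.gt
        rw [h1, B.gt]
      have kA0 : B.g (B.t - 1) ≠ A.g 0 := by
        intro h
        rcases hkey 0 (by omega) (B.t - 1) (by omega) h.symm with ⟨h1, h2⟩ | ⟨h1, h2⟩ <;> omega
      have kA1a : B.g (B.t - 1) ≠ A.g 1 := by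
        intro h
        have := B.inj (B.t - 1) (by omega) B.t le_rfl (by rw [h, hAgu])
        omega
      have kA1b : B.g (B.t - 2) ≠ A.g 1 := by
        intro h
        have := B.inj (B.t - 2) (by omega) B.t le_rfl (by rw [h, hAgu])
        omega
      have V2 : vtx (q + ((2 : ℕ) : ZMod (2 * r))) = B.g (B.t - 1) := by
        rw [hv2 2 (by omega) (by omega), hA]
      have V3 : vtx (q + ((2 : ℕ) : ZMod (2 * r)) + 1) = B.g (B.t - 2) := by
        rw [c3, hv2 3 (by omega) (by omega), hA]
      intro hcon
      simp only [c2, V2, V3, V0, V1] at hcon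
      rcases Sym2.eq_iff.1 hcon with ⟨ha, hb⟩ | ⟨ha, hb⟩ <;>
        first
          | exact kA0 ha
          | exact kA1a ha
          | exact kA1b hb
  }

lemma odd_case {E : Set (Sym2 V)} {r : ℕ} (hr : 2 ≤ r) (vtx : ZMod (2 * r) → V)
    (hwalk : IsClosedWalk E vtx) (hns : NonSplit vtx) {u v : V} (huv : u ≠ v)
    (p p' q q' : ZMod (2 * r)) (hp : vtx p = u) (hp' : vtx p' = u) (hpp' : p ≠ p')
    (hq : vtx q = v) (hq' : vtx q' = v) (hqq' : q ≠ q')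
    (A B : Arc E vtx u v)
    (hkey : ∀ i ≤ A.t, ∀ j ≤ B.t, A.g i = B.g j → (i = 0 ∧ j = 0) ∨ (i = A.t ∧ j = B.t))
    (hnot2 : ¬ (A.t = 1 ∧ B.t = 1))
    (dis1 : Dis vtx p q A) (dis2 : Dis vtx p q' B) (dis3 : Dis vtx p' q B)
    (dis4 : Dis vtx p' q' A) :
    Decomposable E vtx := by
  rcases dis1 with ⟨hk1, t1⟩ | ⟨hk1, t1⟩
  · exact odd_core hr vtx hwalk hns huv p p' q q' hp hp' hpp' hq hq' hqq' A B hkey hnot2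
      hk1 t1 dis2 dis3 dis4
  · have hkey' : ∀ i ≤ A.rev.t, ∀ j ≤ B.rev.t, A.rev.g i = B.rev.g j →
        (i = 0 ∧ j = 0) ∨ (i = A.rev.t ∧ j = B.rev.t) := by
      intro i hi j hj h
      have hi' : i ≤ A.t := hi
      have hj' : j ≤ B.t := hj
      rcases hkey (A.t - i) (by omega) (B.t - j) (by omega) h with ⟨h1, h2⟩ | ⟨h1, h2⟩
      · exact Or.inr ⟨by show i = A.t; omega, by show j = B.t; omega⟩
      · exact Or.inl ⟨by omega, by omega⟩
    have hnot2' : ¬ (A.rev.t = 1 ∧ B.rev.t = 1) := hnot2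
    exact odd_core hr vtx hwalk hns huv.symm q q' p p' hq hq' hqq' hp hp' hpp' A.rev B.rev
      hkey' hnot2' hk1 t1 (dis_swap dis3) (dis_swap dis2) (dis_swap dis4)

end Arcs

section Arcs2

lemma build_arcs {E : Set (Sym2 V)} {r : ℕ} (hr : 0 < r) (vtx : ZMod (2 * r) → V)
    (c : Cyc V E) (hsub : c.edges ⊆ walkEdges vtx) {u v : V} (huv : u ≠ v)
    (iu iv : ZMod c.len) (hiu : c.vtx iu = u) (hiv : c.vtx iv = v) :
    ∃ A B : Arc E vtx u v, A.t = (iu - iv).val ∧ B.t = (iv - iu).val ∧ A.t + B.t = c.len ∧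
      (∀ i ≤ A.t, ∀ j ≤ B.t, A.g i = B.g j → (i = 0 ∧ j = 0) ∨ (i = A.t ∧ j = B.t)) := by
  haveI : NeZero c.len := ⟨by have := c.pos; omega⟩
  have hiuv : iu ≠ iv := fun h => huv (by rw [← hiu, h, hiv])
  have hrng : ∀ m : ZMod c.len, c.vtx m ∈ Set.range vtx := by
    intro m
    have hm : s(c.vtx m, c.vtx (m + 1)) ∈ walkEdges vtx := hsub ⟨m, rfl⟩
    obtain ⟨j, hj⟩ := hm
    rcases Sym2.eq_iff.1 hj with ⟨h1, _⟩ | ⟨h1, _⟩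
    · exact ⟨j, h1.symm⟩
    · exact ⟨j + 1, h1.symm⟩
  have ht12 : (iu - iv).val + (iv - iu).val = c.len := val_compl hiuv.symm
  have ht1lt : (iu - iv).val < c.len := ZMod.val_lt _
  have ht2lt : (iv - iu).val < c.len := ZMod.val_lt _
  have key : ∀ i ≤ (iu - iv).val, ∀ j ≤ (iv - iu).val,
      c.vtx (iv + (i : ℕ)) = c.vtx (iv - (j : ℕ)) →
      (i = 0 ∧ j = 0) ∨ (i = (iu - iv).val ∧ j = (iv - iu).val) := by
    intro i hi j hj h
    have h2 : iv + ((i : ℕ) : ZMod c.len) = iv - ((j : ℕ) : ZMod c.len) := c.inj h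
    have h3 : ((i + j : ℕ) : ZMod c.len) = 0 := by push_cast; linear_combination h2
    have h5 : c.len ∣ i + j := (ZMod.natCast_eq_zero_iff _ _).1 h3
    obtain ⟨k, hk⟩ := h5
    have hk1 : k ≤ 1 := by
      by_contra hcon
      have : 2 * c.len ≤ c.len * k := by
        calc 2 * c.len = c.len * 2 := by ring
          _ ≤ c.len * k := Nat.mul_le_mul_left _ (by omega)
      omega
    interval_cases k
    · left; omega
    · right
      rw [mul_one] at hk
      constructor <;> omega
  refine ⟨⟨(iu - iv).val, zmod_val_pos (sub_ne_zero.2 hiuv), fun s => c.vtx (iv + (s : ℕ)),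
      ?_, ?_, ?_, ?_, fun s _ => hrng _⟩,
    ⟨(iv - iu).val, zmod_val_pos (sub_ne_zero.2 hiuv.symm), fun s => c.vtx (iv - (s : ℕ)),
      ?_, ?_, ?_, ?_, fun s _ => hrng _⟩, rfl, rfl, ht12, ?_⟩
  · show c.vtx (iv + ((0 : ℕ) : ZMod c.len)) = v
    simpa using hiv
  · show c.vtx (iv + (((iu - iv).val : ℕ) : ZMod c.len)) = u
    rw [add_cast_val iv iu]
    exact hiu
  · intro i hi j hj h
    have h2 := c.inj h
    have h3 : ((i : ℕ) : ZMod c.len) = ((j : ℕ) : ZMod c.len) := add_left_cancel h2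
    have h4 := congrArg ZMod.val h3
    rwa [ZMod.val_cast_of_lt (by omega), ZMod.val_cast_of_lt (by omega)] at h4
  · intro s hs
    show s(c.vtx (iv + (s : ℕ)), c.vtx (iv + ((s + 1 : ℕ) : ZMod c.len))) ∈ E
    have hc : iv + ((s + 1 : ℕ) : ZMod c.len) = (iv + (s : ℕ)) + 1 := by push_cast; ring
    rw [hc]
    exact c.mem _
  · show c.vtx (iv - ((0 : ℕ) : ZMod c.len)) = v
    simpa using hiv
  · show c.vtx (iv - (((iv - iu).val : ℕ) : ZMod c.len)) = u
    rw [ZMod.natCast_rightInverse (iv - iu), show iv - (iv - iu) = iu by ring]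
    exact hiu
  · intro i hi j hj h
    have h2 := c.inj h
    have h3 : ((i : ℕ) : ZMod c.len) = ((j : ℕ) : ZMod c.len) := sub_right_inj.1 h2
    have h4 := congrArg ZMod.val h3
    rwa [ZMod.val_cast_of_lt (by omega), ZMod.val_cast_of_lt (by omega)] at h4
  · intro s hs
    show s(c.vtx (iv - (s : ℕ)), c.vtx (iv - ((s + 1 : ℕ) : ZMod c.len))) ∈ E
    rw [show iv - ((s : ℕ) : ZMod c.len) = (iv - ((s + 1 : ℕ) : ZMod c.len)) + 1 by
      push_cast; ring, Sym2.eq_swap]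
    exact c.mem _
  · exact key

end Arcs2


end Aux

end Polar

open Polar in
/-- Lemma 3.18: if a non-split even closed walk `w` contains a (constituent) cycle of which at
least two vertices are vertex repetitions of `w`, then `w` is decomposable. -/
theorem nonsplit_walk_with_doubly_repeated_cycle_is_decomposable {V : Type*}
    (E : Set (Sym2 V)) {r : ℕ} (hr : 0 < r) (vtx : ZMod (2 * r) → V)
    (hwalk : IsClosedWalk E vtx) (hns : NonSplit vtx)
    (c : Cyc V E) (hsub : c.edges ⊆ walkEdges vtx)
    (u v : V) (huv : u ≠ v) (hu : u ∈ c.vertices) (hv : v ∈ c.vertices)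
    (hurep : ∃ j l : ZMod (2 * r), j ≠ l ∧ vtx j = u ∧ vtx l = u)
    (hvrep : ∃ j l : ZMod (2 * r), j ≠ l ∧ vtx j = v ∧ vtx l = v) :
    Decomposable E vtx := by
  haveI : NeZero (2 * r) := ⟨by omega⟩
  obtain ⟨p, p', hpp', hpu, hp'u⟩ := hurep
  obtain ⟨q, q', hqq', hqv, hq'v⟩ := hvrep
  rcases Nat.lt_or_ge r 2 with hr1 | hr2
  · exfalso
    have hall : ∀ x : ZMod (2 * r), x = p ∨ x = p' := by
      intro x
      by_contra hcon
      push_neg at hcon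
      have h1 : x.val ≠ p.val := fun h => hcon.1 (ZMod.val_injective _ h)
      have h2 : x.val ≠ p'.val := fun h => hcon.2 (ZMod.val_injective _ h)
      have h3 : p.val ≠ p'.val := fun h => hpp' (ZMod.val_injective _ h)
      have hx := ZMod.val_lt x
      have hp := ZMod.val_lt p
      have hp' := ZMod.val_lt p'
      omega
    rcases hall q with h | h
    · exact huv (by rw [← hpu, ← h, hqv])
    · exact huv (by rw [← hp'u, ← h, hqv])
  obtain ⟨iu, hiu⟩ := hu
  obtain ⟨iv, hiv⟩ := hv
  obtain ⟨A, B, hAt, hBt, hABlen, hkey⟩ := build_arcs hr vtx c hsub huv iu iv hiu hiv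
  have hnot2 : ¬ (A.t = 1 ∧ B.t = 1) := by
    rintro ⟨h1, h2⟩
    exact c.not_two (by omega)
  have hkeyBA : ∀ i ≤ B.t, ∀ j ≤ A.t, B.g i = A.g j →
      (i = 0 ∧ j = 0) ∨ (i = B.t ∧ j = A.t) := by
    intro i hi j hj h
    rcases hkey j hj i hi h.symm with ⟨h1, h2⟩ | ⟨h1, h2⟩
    · exact Or.inl ⟨h2, h1⟩
    · exact Or.inr ⟨h2, h1⟩
  have hnot2' : ¬ (B.t = 1 ∧ A.t = 1) := fun h => hnot2 ⟨h.2, h.1⟩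
  have h2re : (2 * r) % 2 = 0 := by omega
  have hoq : (q' - q).val % 2 = 1 := odd_gap hr vtx hns hqq' (by rw [hqv, hq'v])
  have hop : (p' - p).val % 2 = 1 := odd_gap hr vtx hns hpp' (by rw [hpu, hp'u])
  have hopc : (p - p').val % 2 = 1 := by
    have := val_compl hpp'
    omega
  have par1 : (q' - p).val % 2 = ((q - p).val + (q' - q).val) % 2 :=
    val_parity_add h2re _ _ _ (by ring)
  have par2 : (q - p').val % 2 = ((q - p).val + (p - p').val) % 2 :=
    val_parity_add h2re _ _ _ (by ring)
  have par3 : (q' - p').val % 2 = ((q' - p).val + (p - p').val) % 2 :=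
    val_parity_add h2re _ _ _ (by ring)
  by_cases hLpar : (A.t + B.t) % 2 = 0
  · by_cases hpar : ((q - p).val + A.t) % 2 = 0
    · rcases combo_or hr vtx hwalk huv A p q hpu hqv hpar with hdec | disA
      · exact hdec
      rcases combo_or hr vtx hwalk huv B p q hpu hqv (by omega) with hdec | disB
      · exact hdec
      exact (even_case hr vtx huv p p' q hpu hp'u hpp' hqv A B hkey hnot2 disA disB).elim
    · rcases combo_or hr vtx hwalk huv A p q' hpu hq'v (by omega) with hdec | disA
      · exact hdec
      rcases combo_or hr vtx hwalk huv B p q' hpu hq'v (by omega) with hdec | disB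
      · exact hdec
      exact (even_case hr vtx huv p p' q' hpu hp'u hpp' hq'v A B hkey hnot2 disA disB).elim
  · by_cases hpar : ((q - p).val + A.t) % 2 = 0
    · rcases combo_or hr vtx hwalk huv A p q hpu hqv hpar with hdec | dis1
      · exact hdec
      rcases combo_or hr vtx hwalk huv B p q' hpu hq'v (by omega) with hdec | dis2
      · exact hdec
      rcases combo_or hr vtx hwalk huv B p' q hp'u hqv (by omega) with hdec | dis3
      · exact hdec
      rcases combo_or hr vtx hwalk huv A p' q' hp'u hq'v (by omega) with hdec | dis4
      · exact hdec
      exact odd_case hr2 vtx hwalk hns huv p p' q q' hpu hp'u hpp' hqv hq'v hqq' A B hkey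
        hnot2 dis1 dis2 dis3 dis4
    · rcases combo_or hr vtx hwalk huv B p q hpu hqv (by omega) with hdec | dis1
      · exact hdec
      rcases combo_or hr vtx hwalk huv A p q' hpu hq'v (by omega) with hdec | dis2
      · exact hdec
      rcases combo_or hr vtx hwalk huv A p' q hp'u hqv (by omega) with hdec | dis3
      · exact hdec
      rcases combo_or hr vtx hwalk huv B p' q' hp'u hq'v (by omega) with hdec | dis4
      · exact hdec
      exact odd_case hr2 vtx hwalk hns huv p p' q q' hpu hp'u hpp' hqv hq'v hqq' B A hkeyBA
        hnot2' dis1 dis2 dis3 dis4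
end

section
/- Let f = {f_1,...,f_m} be monomials of degree 2 in R = k[x_1,...,x_n], and let w = {g_1,...,g_{2r}} be an even closed walk in the graph G(f). Let g = lcm of the distinct monomials among g_1,...,g_{2r}. Then the alternating vector (g/g_1, −g/g_2, g/g_3, ..., −g/g_{2r}) is a syzygy of the differentials dg_1,...,dg_{2r}, i.e., Σ_{j=1}^{2r} (−1)^{j+1} (g/g_j) dg_j = 0 in the free module ⊕_{i=1}^n R dx_i, where d(x_a x_b) = x_b dx_a + x_a dx_b. -/
noncomputable section

namespace PolarAlg

open MvPolynomial

variable (k : Type*) [Field k]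

/-- The exponent vector of the degree-2 monomial attached to an edge (or loop) `e`. -/
def sym2Exp {n : ℕ} (e : Sym2 (Fin n)) : Fin n → ℕ :=
  Sym2.lift ⟨fun a b i => (if a = i then 1 else 0) + (if b = i then 1 else 0),
    fun a b => funext fun i => add_comm _ _⟩ e

/-- The monomial with exponent vector `g`. -/
def mon {n : ℕ} (g : Fin n → ℕ) : MvPolynomial (Fin n) k := ∏ i, X i ^ g i

/-- The degree-2 monomial `f i` attached to the edge `ε i` of the graph of `f`. -/
def fmon {n : ℕ} {ι : Type*} (ε : ι → Sym2 (Fin n)) (i : ι) : MvPolynomial (Fin n) k :=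
  mon k (sym2Exp (ε i))

/-- `(vtx, eidx)` is an (even, of length `2r`) closed walk in the graph `G(f)` whose edges are
indexed by `ι` via `ε` : the `j`-th edge of the walk is the edge `ε (eidx j)`, joining
`vtx j` and `vtx (j+1)`. -/
def IsWalkIn {n r : ℕ} {ι : Type*} (ε : ι → Sym2 (Fin n)) (vtx : ZMod (2 * r) → Fin n)
    (eidx : ZMod (2 * r) → ι) : Prop :=
  ∀ j, ε (eidx j) = s(vtx j, vtx (j + 1))

/-- The exponent vector of the lcm `g` of the (distinct) edge monomials of a walk. -/
def supExp {n r : ℕ} (vtx : ZMod (2 * r) → Fin n) : Fin n → ℕ := fun l =>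
  (Finset.range (2 * r)).sup fun j =>
    sym2Exp (s(vtx (j : ZMod (2 * r)), vtx ((j : ZMod (2 * r)) + 1))) l

/-- The differential syzygy `z_w` attached to an even closed walk `w = (vtx, eidx)`:
its `i`-th coordinate is the sum of the alternating terms `± g/g_j` over the positions `j`
at which the walk traverses the edge `f i`. -/
def zw {n r : ℕ} {ι : Type*} [DecidableEq ι] (ε : ι → Sym2 (Fin n))
    (vtx : ZMod (2 * r) → Fin n) (eidx : ZMod (2 * r) → ι) : ι → MvPolynomial (Fin n) k :=
  fun i => ∑ j ∈ Finset.range (2 * r),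
    if eidx (j : ZMod (2 * r)) = i then
      (-1 : MvPolynomial (Fin n) k) ^ j * mon k fun l => supExp vtx l - sym2Exp (ε i) l
    else 0

/-- The binomial `p_w = T_{w⁺} - T_{w⁻}` attached to an even closed walk. -/
def pw {r : ℕ} {ι : Type*} (eidx : ZMod (2 * r) → ι) : MvPolynomial ι k :=
  (∏ j ∈ (Finset.range (2 * r)).filter (fun j => Even j), X (eidx (j : ZMod (2 * r)))) -
    ∏ j ∈ (Finset.range (2 * r)).filter (fun j => ¬ Even j), X (eidx (j : ZMod (2 * r)))

/-- The differential syzygy module `Z` of `f`, as the set of syzygies of the transposed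
Jacobian module: vectors `a` with `∑ i, a i · df i = 0`, i.e. `∑ i, a i ∂f i/∂x l = 0`
for every `l`. -/
def Zset (n : ℕ) {ι : Type*} [Fintype ι] (ε : ι → Sym2 (Fin n)) :
    Set (ι → MvPolynomial (Fin n) k) :=
  {a | ∀ l : Fin n, ∑ i, a i * pderiv l (fmon k ε i) = 0}

/-- The generators of the polar syzygy module: the `T`-gradients of the polynomial
relations of `f`, evaluated at `f`. -/
def polarSet (n : ℕ) {ι : Type*} [Fintype ι] (ε : ι → Sym2 (Fin n)) :
    Set (ι → MvPolynomial (Fin n) k) :=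
  {v | ∃ F : MvPolynomial ι k, aeval (fmon k ε) F = 0 ∧
    v = fun i => aeval (fmon k ε) (pderiv i F)}

/-- `f` is polarizable: the polar syzygy module `P` equals the differential syzygy module
`Z` (the inclusion `P ⊆ Z` always holds, by the chain rule). -/
def Polarizable (n : ℕ) {ι : Type*} [Fintype ι] (ε : ι → Sym2 (Fin n)) : Prop :=
  Zset k n ε ⊆ ↑(Submodule.span (MvPolynomial (Fin n) k) (polarSet k n ε))

end PolarAlg


/-!
Write `e_j` for the exponent vector of the `j`-th edge monomial `g_j` of the walk and `g` for their
lcm. Since `g_j ∣ g`, each term `(g / g_j) ∂g_j/∂x_l` equals `e_j(l) · g / x_l`, so the syzygy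
reduces to the scalar identity `∑_j (-1)^j e_j(l) = 0`. Now `e_j(l) = [v_j = l] + [v_{j+1} = l]`
for the vertices `v_j` of the walk, and the alternating sum telescopes to
`[v_0 = l] - [v_{2r} = l] = 0` because the walk is closed and of even length.
-/

namespace PolarAlg

open MvPolynomial Finset

section Monomials

variable (k : Type*) [Field k] {n : ℕ}

theorem mon_eq_monomial (e : Fin n → ℕ) :
    mon k e = monomial (Finsupp.equivFunOnFinite.symm e) 1 := by
  rw [monomial_eq, map_one, one_mul, Finsupp.prod,
    prod_subset (subset_univ _) fun i _ hi => by simp_all]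
  rfl

theorem mon_add (e e' : Fin n → ℕ) : mon k (e + e') = mon k e * mon k e' := by
  simp only [mon, Pi.add_apply, pow_add, prod_mul_distrib]

theorem pderiv_mon (e : Fin n → ℕ) (l : Fin n) :
    pderiv l (mon k e) = (e l : MvPolynomial (Fin n) k) * mon k (e - Pi.single l 1) := by
  have hexp : Finsupp.equivFunOnFinite.symm (e - Pi.single l 1) =
      Finsupp.equivFunOnFinite.symm e - Finsupp.single l 1 := by
    ext i
    simp [Pi.single_apply, Finsupp.single_apply, eq_comm]
  rw [mon_eq_monomial, mon_eq_monomial, pderiv_monomial, hexp, ← map_natCast (C (σ := Fin n)),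
    C_mul_monomial, one_mul, mul_one]
  rfl

theorem mon_tsub_mul_pderiv_mon {g e : Fin n → ℕ} (heg : e ≤ g) (l : Fin n) :
    mon k (g - e) * pderiv l (mon k e) =
      (e l : MvPolynomial (Fin n) k) * mon k (g - Pi.single l 1) := by
  rw [pderiv_mon, mul_left_comm, ← mon_add]
  rcases Nat.eq_zero_or_pos (e l) with hl | hl
  · simp [hl]
  · have hle : Pi.single l 1 ≤ e := fun i => by
      rcases eq_or_ne i l with rfl | hi
      · rw [Pi.single_eq_same]; exact hl
      · simp [hi]
    rw [tsub_add_tsub_cancel heg hle]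

end Monomials

theorem sum_range_neg_one_pow_mul_add_succ_eq_zero {A : Type*} [CommRing A] {m : ℕ}
    (hm : Even m) (a : ℕ → A) (h : a m = a 0) :
    ∑ j ∈ range m, (-1) ^ j * (a j + a (j + 1)) = 0 := by
  calc ∑ j ∈ range m, (-1) ^ j * (a j + a (j + 1))
      = -∑ j ∈ range m, ((-1) ^ (j + 1) * a (j + 1) - (-1) ^ j * a j) := by
        rw [← sum_neg_distrib]
        refine sum_congr rfl fun j _ => ?_
        ring
    _ = (-1) ^ 0 * a 0 - (-1) ^ m * a m := by
        rw [sum_range_sub (fun j => (-1) ^ j * a j)]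
        ring
    _ = 0 := by rw [hm.neg_one_pow, h]; ring

theorem sym2Exp_mk_apply {n : ℕ} (a b i : Fin n) :
    sym2Exp s(a, b) i = (if a = i then 1 else 0) + (if b = i then 1 else 0) := rfl

theorem sum_range_neg_one_pow_mul_sym2Exp_eq_zero {A : Type*} [CommRing A] {n m : ℕ}
    (hm : Even m) (vtx : ZMod m → Fin n) (l : Fin n) :
    ∑ j ∈ range m, (-1 : A) ^ j *
      (sym2Exp s(vtx (j : ZMod m), vtx ((j : ZMod m) + 1)) l : A) = 0 := by
  have := sum_range_neg_one_pow_mul_add_succ_eq_zero hm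
    (fun j => if vtx (j : ZMod m) = l then (1 : A) else 0) (by simp)
  simpa [sym2Exp_mk_apply, Nat.cast_ite] using this

theorem sym2Exp_le_supExp {n r : ℕ} (vtx : ZMod (2 * r) → Fin n) {j : ℕ}
    (hj : j ∈ range (2 * r)) :
    sym2Exp s(vtx (j : ZMod (2 * r)), vtx ((j : ZMod (2 * r)) + 1)) ≤ supExp vtx :=
  fun i => le_sup (f := fun j : ℕ => sym2Exp s(vtx (j : ZMod (2 * r)), vtx (j + 1)) i) hj

end PolarAlg

open PolarAlg MvPolynomial in
theorem walk_gives_differential_syzygy_general (k : Type*) [Field k] {n r : ℕ}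
    (vtx : ZMod (2 * r) → Fin n) :
    ∀ l : Fin n,
      ∑ j ∈ Finset.range (2 * r),
        (-1 : MvPolynomial (Fin n) k) ^ j *
          (mon k (fun i => supExp vtx i -
              sym2Exp (s(vtx (j : ZMod (2 * r)), vtx ((j : ZMod (2 * r)) + 1))) i) *
            pderiv l (mon k (sym2Exp (s(vtx (j : ZMod (2 * r)),
              vtx ((j : ZMod (2 * r)) + 1)))))) = 0 := by
  intro l
  calc _ = ∑ j ∈ Finset.range (2 * r), (-1 : MvPolynomial (Fin n) k) ^ j *
          (sym2Exp s(vtx (j : ZMod (2 * r)), vtx ((j : ZMod (2 * r)) + 1)) l :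
            MvPolynomial (Fin n) k) *
            mon k (supExp vtx - Pi.single l 1) := by
        refine Finset.sum_congr rfl fun j hj => ?_
        rw [mul_assoc]
        exact congrArg _ (mon_tsub_mul_pderiv_mon k (sym2Exp_le_supExp vtx hj) l)
    _ = 0 := by
        rw [← Finset.sum_mul, sum_range_neg_one_pow_mul_sym2Exp_eq_zero (even_two_mul r),
          zero_mul]

open PolarAlg MvPolynomial in
/-- Lemma 4.1: for an even closed walk `w = {g_1,…,g_{2r}}` in the graph `G(f)` of a set `f`
of degree-2 monomials, and `g` the lcm of the distinct monomials of the walk, the alternating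
vector `(g/g_1, -g/g_2, …, -g/g_{2r})` is a syzygy of the differentials `dg_1,…,dg_{2r}`:
`∑_j (-1)^{j+1} (g/g_j) dg_j = 0` coordinatewise in `⊕_l R dx_l`. -/
theorem walk_gives_differential_syzygy (k : Type*) [Field k] [CharZero k] {n r : ℕ}
    (hr : 1 ≤ r) (f : Set (MvPolynomial (Fin n) k)) (vtx : ZMod (2 * r) → Fin n)
    (hf : ∀ j : ZMod (2 * r), mon k (sym2Exp s(vtx j, vtx (j + 1))) ∈ f) :
    ∀ l : Fin n,
      ∑ j ∈ Finset.range (2 * r),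
        (-1 : MvPolynomial (Fin n) k) ^ j *
          (mon k (fun i => supExp vtx i -
              sym2Exp (s(vtx (j : ZMod (2 * r)), vtx ((j : ZMod (2 * r)) + 1))) i) *
            pderiv l (mon k (sym2Exp (s(vtx (j : ZMod (2 * r)),
              vtx ((j : ZMod (2 * r)) + 1)))))) = 0 :=
  walk_gives_differential_syzygy_general k vtx
end
end
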